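/- arXiv:2411.05388 — 9 statements merged into one kernel-verified Lean document; each statement's English description precedes it below -/
import Mathlib

section
/- For every infinite cardinal 𝔞 and every non-zero natural number n, (2^{𝒪ₙ(𝔞)})^{ℵ₀} = 2^{ℬₙ(𝔞)}. Concretely: for every infinite set A and every n ≥ 1, the cardinal (2^{|𝒪ₙ(A)|})^{ℵ₀} equals 2^{|ℬₙ(A)|}. -/
open Set

/-- A finitary partition of the whole type `α`: a family of pairwise disjoint
nonempty finite subsets whose union is everything. -/
def IsFinitaryPartition {α : Type*} (P : Set (Set α)) : Prop :=
  (∀ p ∈ P, p.Finite) ∧ (∀ p ∈ P, p.Nonempty) ∧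
    (∀ p ∈ P, ∀ q ∈ P, p ≠ q → Disjoint p q) ∧ ⋃₀ P = Set.univ

/-- The set of non-singleton blocks of a partition. -/
def nsBlocks {α : Type*} (P : Set (Set α)) : Set (Set α) :=
  {p ∈ P | p.Nontrivial}

/-- `ℬₙ(A)`: finitary partitions with exactly `n` non-singleton blocks. -/
def BPart (α : Type*) (n : ℕ) : Set (Set (Set α)) :=
  {P | IsFinitaryPartition P ∧ (nsBlocks P).Finite ∧ (nsBlocks P).ncard = n}

/-- `ℬ_fin(A)`: finitary partitions with finitely many non-singleton blocks. -/
def BFinPart (α : Type*) : Set (Set (Set α)) :=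
  {P | IsFinitaryPartition P ∧ (nsBlocks P).Finite}

/-- `𝒪ₙ(A)`: ordered `n`-tuples of pairwise disjoint finite subsets of `A`. -/
def OTuple (α : Type*) (n : ℕ) : Set (Fin n → Set α) :=
  {p | (∀ i, (p i).Finite) ∧ ∀ i j, i ≠ j → Disjoint (p i) (p j)}

/-! Both `𝒪ₙ(A)` and `ℬₙ(A)` have cardinality `|A|`, so both sides equal `2 ^ |A|`, since
`|A| · ℵ₀ = |A|`. For the upper bounds, a tuple is a finite family of finite sets, and a finitary
partition is determined by its finitely many non-singleton blocks. For the lower bounds, embed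
`A × Fin n × Bool` into `A` by `e`; the pairs `{e (a, i, false), e (a, i, true)}` for `i < n` are
`n` disjoint blocks, and their union determines `a`. -/

section

open Cardinal Function

variable {α : Type*}

lemma nonempty_prod_embedding_of_finite [Infinite α] (β : Type) [Finite β] :
    Nonempty (α × β ↪ α) := by
  rw [← Cardinal.le_def, mk_prod, lift_uzero]
  exact (mul_le_max_of_aleph0_le_left (aleph0_le_mk α)).trans
    (max_le le_rfl ((lift_lt_aleph0.mpr (lt_aleph0_of_finite β)).le.trans (aleph0_le_mk α)))

lemma mk_finite_subsets_of_infinite [Infinite α] : #{s : Set α // s.Finite} = #α :=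
  (mk_congr OrderIso.finsetSetFinite.toEquiv).symm.trans (mk_finset_of_infinite α)

def addSingletons (Q : Set (Set α)) : Set (Set α) :=
  Q ∪ singleton '' (⋃₀ Q)ᶜ

lemma nsBlocks_addSingletons {Q : Set (Set α)} (hQ : ∀ p ∈ Q, p.Nontrivial) :
    nsBlocks (addSingletons Q) = Q := by
  ext p
  constructor
  · rintro ⟨hp | ⟨x, -, rfl⟩, hnt⟩
    · exact hp
    · exact absurd hnt not_nontrivial_singleton
  · exact fun hp => ⟨Or.inl hp, hQ p hp⟩

lemma isFinitaryPartition_addSingletons {Q : Set (Set α)} (hfin : ∀ p ∈ Q, p.Finite)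
    (hne : ∀ p ∈ Q, p.Nonempty) (hdisj : Q.Pairwise Disjoint) :
    IsFinitaryPartition (addSingletons Q) := by
  refine ⟨?_, ?_, ?_, ?_⟩
  · rintro p (hp | ⟨x, -, rfl⟩)
    exacts [hfin p hp, finite_singleton x]
  · rintro p (hp | ⟨x, -, rfl⟩)
    exacts [hne p hp, singleton_nonempty x]
  · rintro p (hp | ⟨x, hx, rfl⟩) q (hq | ⟨y, hy, rfl⟩) hpq
    · exact hdisj hp hq hpq
    · exact disjoint_singleton_right.mpr fun hyp => hy ⟨p, hp, hyp⟩
    · exact disjoint_singleton_left.mpr fun hxq => hx ⟨q, hq, hxq⟩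
    · exact disjoint_singleton.mpr fun hxy => hpq (hxy ▸ rfl)
  · refine eq_univ_of_forall fun x => ?_
    by_cases hx : x ∈ ⋃₀ Q
    · exact sUnion_mono subset_union_left hx
    · exact ⟨{x}, Or.inr ⟨x, hx, rfl⟩, rfl⟩

lemma addSingletons_mem_BPart {Q : Set (Set α)} (hQ : Q.Finite) (hfin : ∀ p ∈ Q, p.Finite)
    (hnt : ∀ p ∈ Q, p.Nontrivial) (hdisj : Q.Pairwise Disjoint) :
    addSingletons Q ∈ BPart α Q.ncard := by
  refine ⟨isFinitaryPartition_addSingletons hfin (fun p hp => (hnt p hp).nonempty) hdisj, ?_⟩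
  rw [nsBlocks_addSingletons hnt]
  exact ⟨hQ, rfl⟩

lemma IsFinitaryPartition.eq_addSingletons_nsBlocks {P : Set (Set α)}
    (hP : IsFinitaryPartition P) : P = addSingletons (nsBlocks P) := by
  obtain ⟨-, hne, hdisj, huniv⟩ := hP
  ext p
  constructor
  · intro hp
    by_cases hnt : p.Nontrivial
    · exact Or.inl ⟨hp, hnt⟩
    obtain ⟨x, hx⟩ := hne p hp
    refine Or.inr ⟨x, ?_, ((not_nontrivial_iff.mp hnt).eq_singleton_of_mem hx).symm⟩
    rintro ⟨q, ⟨hq, hqnt⟩, hxq⟩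
    exact disjoint_left.mp (hdisj p hp q hq fun hpq => hnt (hpq ▸ hqnt)) hx hxq
  · rintro (⟨hp, -⟩ | ⟨x, hx, rfl⟩)
    · exact hp
    obtain ⟨q, hq, hxq⟩ : x ∈ ⋃₀ P := huniv ▸ mem_univ x
    have hqsub : q.Subsingleton := not_nontrivial_iff.mp fun hqnt => hx ⟨q, ⟨hq, hqnt⟩, hxq⟩
    rwa [← hqsub.eq_singleton_of_mem hxq]

lemma injOn_nsBlocks : InjOn nsBlocks {P : Set (Set α) | IsFinitaryPartition P} :=
  fun P hP P' hP' h => by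
    rw [IsFinitaryPartition.eq_addSingletons_nsBlocks hP,
      IsFinitaryPartition.eq_addSingletons_nsBlocks hP', h]

lemma BPart_subset_BFinPart {n : ℕ} : BPart α n ⊆ BFinPart α :=
  fun _ hP => ⟨hP.1, hP.2.1⟩

lemma mk_BFinPart_le [Infinite α] : #(BFinPart α) ≤ #α := by
  let blocks (P : Set (Set α)) : Set (Finset α) := (↑) ⁻¹' nsBlocks P
  have hinj : InjOn blocks (BFinPart α) := by
    have hrange {P} (hP : P ∈ BFinPart α) : nsBlocks P ⊆ range ((↑) : Finset α → Set α) :=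
      fun q hq => (hP.1.1 q hq.1).exists_finset_coe
    exact fun P hP P' hP' h =>
      injOn_nsBlocks hP.1 hP'.1 ((preimage_eq_preimage' (hrange hP) (hrange hP')).mp h)
  have hfin : blocks '' BFinPart α ⊆ {T | T.Finite} := by
    rintro _ ⟨P, hP, rfl⟩
    exact hP.2.preimage Finset.coe_injective.injOn
  calc #(BFinPart α) = #(blocks '' BFinPart α) := (mk_image_eq_of_injOn _ _ hinj).symm
    _ ≤ #{T : Set (Finset α) // T.Finite} := mk_le_mk_of_subset hfin
    _ = #α := by rw [mk_finite_subsets_of_infinite, mk_finset_of_infinite]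

section PairBlocks

variable {ι β : Type*} (e : α × ι × Bool ↪ β)

def pairBlocks (a : α) (i : ι) : Set β :=
  range fun b => e (a, i, b)

lemma pairBlocks_finite (a : α) (i : ι) : (pairBlocks e a i).Finite :=
  finite_range _

lemma pairBlocks_nontrivial (a : α) (i : ι) : (pairBlocks e a i).Nontrivial :=
  ⟨e (a, i, false), mem_range_self _, e (a, i, true), mem_range_self _,
    fun h => Bool.false_ne_true (congrArg (·.2.2) (e.injective h))⟩

lemma pairwise_disjoint_pairBlocks (a : α) : Pairwise (Disjoint on pairBlocks e a) :=
  fun _ _ hij => disjoint_range_iff.mpr fun _ _ h => hij (congrArg (·.2.1) (e.injective h))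

lemma injective_pairBlocks (a : α) : Injective (pairBlocks e a) := by
  intro i j h
  by_contra hij
  have hdisj := pairwise_disjoint_pairBlocks e a hij
  rw [onFun, h, disjoint_self, bot_eq_empty] at hdisj
  exact (pairBlocks_nontrivial e a j).nonempty.ne_empty hdisj

lemma injective_range_pairBlocks [Nonempty ι] : Injective fun a => range (pairBlocks e a) := by
  intro a a' (h : range (pairBlocks e a) = range (pairBlocks e a'))
  obtain ⟨i⟩ := ‹Nonempty ι›
  obtain ⟨j, hj⟩ : pairBlocks e a i ∈ range (pairBlocks e a') := h ▸ mem_range_self i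
  obtain ⟨b, hb⟩ : e (a, i, false) ∈ pairBlocks e a' j := hj ▸ mem_range_self false
  exact (congrArg Prod.fst (e.injective hb)).symm

end PairBlocks

lemma le_mk_OTuple [Infinite α] {n : ℕ} (hn : 1 ≤ n) : #α ≤ #(OTuple α n) := by
  obtain ⟨e⟩ := nonempty_prod_embedding_of_finite (α := α) (Fin n × Bool)
  have : Nonempty (Fin n) := ⟨⟨0, hn⟩⟩
  refine mk_le_of_injective (f := fun a =>
    ⟨pairBlocks e a, pairBlocks_finite e a, pairwise_disjoint_pairBlocks e a⟩) fun a a' h => ?_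
  exact injective_range_pairBlocks e (congrArg range (congrArg Subtype.val h))

lemma le_mk_BPart [Infinite α] {n : ℕ} (hn : 1 ≤ n) : #α ≤ #(BPart α n) := by
  obtain ⟨e⟩ := nonempty_prod_embedding_of_finite (α := α) (Fin n × Bool)
  have : Nonempty (Fin n) := ⟨⟨0, hn⟩⟩
  have hmem (a : α) : addSingletons (range (pairBlocks e a)) ∈ BPart α n := by
    have := addSingletons_mem_BPart (finite_range _)
      (forall_mem_range.mpr (pairBlocks_finite e a))
      (forall_mem_range.mpr (pairBlocks_nontrivial e a))
      (pairwise_disjoint_pairBlocks e a).range_pairwise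
    rwa [ncard_range_of_injective (injective_pairBlocks e a), Nat.card_fin] at this
  refine mk_le_of_injective (f := fun a => ⟨_, hmem a⟩) fun a a' h => ?_
  have hblocks := congrArg (nsBlocks ∘ Subtype.val) h
  simp only [comp_apply,
    nsBlocks_addSingletons (forall_mem_range.mpr (pairBlocks_nontrivial e _))] at hblocks
  exact injective_range_pairBlocks e hblocks

lemma mk_OTuple_le [Infinite α] (n : ℕ) : #(OTuple α n) ≤ #α := by
  calc #(OTuple α n) ≤ #(Fin n → {s : Set α // s.Finite}) :=
        mk_le_of_injective (f := fun p i => ⟨p.1 i, p.2.1 i⟩) fun p q h =>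
          Subtype.ext (funext fun i => congrArg Subtype.val (congrFun h i))
    _ ≤ #α := by
      rw [mk_arrow, mk_finite_subsets_of_infinite, lift_uzero, mk_fin, lift_natCast, power_natCast]
      exact power_nat_le (aleph0_le_mk α)

lemma mk_OTuple_eq [Infinite α] {n : ℕ} (hn : 1 ≤ n) : #(OTuple α n) = #α :=
  (mk_OTuple_le n).antisymm (le_mk_OTuple hn)

lemma mk_BPart_eq [Infinite α] {n : ℕ} (hn : 1 ≤ n) : #(BPart α n) = #α :=
  ((mk_le_mk_of_subset BPart_subset_BFinPart).trans mk_BFinPart_le).antisymm (le_mk_BPart hn)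

end

/-- For every infinite cardinal `𝔞` and every non-zero natural number `n`,
`(2 ^ 𝒪ₙ(𝔞)) ^ ℵ₀ = 2 ^ ℬₙ(𝔞)`. -/
theorem statement0 {α : Type*} [Infinite α] (n : ℕ) (hn : 1 ≤ n) :
    ((2 : Cardinal) ^ Cardinal.mk ↥(OTuple α n)) ^ Cardinal.aleph0 =
      2 ^ Cardinal.mk ↥(BPart α n) := by
  rw [mk_OTuple_eq hn, mk_BPart_eq hn, ← Cardinal.power_mul,
    Cardinal.mul_aleph0_eq (Cardinal.aleph0_le_mk α)]
end

section
/- For every infinite cardinal 𝔞 and every non-zero natural number n, 2^{fin(𝔞)ⁿ} = 2^{ℬ_{2ⁿ−1}(𝔞)}. Concretely: for every infinite set A and every n ≥ 1, the cardinal 2^{|fin(A)ⁿ|} equals 2^{|ℬ_{2ⁿ−1}(A)|}, where fin(A)ⁿ is the n-fold Cartesian power of fin(A). -/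
open Set

/-- Reconstruction: a finitary partition is determined by its non-singleton blocks. -/
lemma my_reconstruct {α : Type*} {P : Set (Set α)} (hP : IsFinitaryPartition P) :
    P = nsBlocks P ∪ (fun x => ({x} : Set α)) '' (⋃₀ nsBlocks P)ᶜ := by
  obtain ⟨hfin, hne, hdisj, huniv⟩ := hP
  ext p
  constructor
  · intro hp
    by_cases hnt : p.Nontrivial
    · exact Or.inl ⟨hp, hnt⟩
    · obtain ⟨x, hx⟩ := hne p hp
      have hps : p = {x} := by
        apply Set.eq_singleton_iff_unique_mem.2 ⟨hx, ?_⟩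
        intro y hy
        by_contra hxy
        exact hnt ⟨y, hy, x, hx, hxy⟩
      refine Or.inr ⟨x, ?_, hps.symm⟩
      intro hxmem
      obtain ⟨q, hq, hxq⟩ := hxmem
      have hpq : p ≠ q := by
        rintro rfl
        exact hnt hq.2
      exact Set.disjoint_left.1 (hdisj p hp q hq.1 hpq) hx hxq
  · rintro (hp | ⟨x, hx, rfl⟩)
    · exact hp.1
    · have hxu : x ∈ ⋃₀ P := huniv ▸ Set.mem_univ x
      obtain ⟨q, hq, hxq⟩ := hxu
      have hqnt : ¬ q.Nontrivial := fun h => hx ⟨q, ⟨hq, h⟩, hxq⟩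
      have : q = {x} := by
        apply Set.eq_singleton_iff_unique_mem.2 ⟨hxq, ?_⟩
        intro y hy
        by_contra hxy
        exact hqnt ⟨y, hy, x, hxq, hxy⟩
      show ({x} : Set α) ∈ P
      exact this ▸ hq

lemma my_mk_finsets {α : Type*} [Infinite α] :
    Cardinal.mk {s : Set α // s.Finite} = Cardinal.mk α := by
  apply le_antisymm
  · calc Cardinal.mk {s : Set α // s.Finite} ≤ Cardinal.mk (Finset α) := by
          apply Cardinal.mk_le_of_injective (f := fun s => s.2.toFinset)
          intro s t h
          apply Subtype.ext
          have := congrArg (fun (u : Finset α) => (u : Set α)) h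
          simpa [Set.Finite.coe_toFinset] using this
       _ = Cardinal.mk α := Cardinal.mk_finset_of_infinite α
  · apply Cardinal.mk_le_of_injective (f := fun a => (⟨{a}, Set.finite_singleton a⟩ : {s : Set α // s.Finite}))
    intro a b h
    simpa using congrArg Subtype.val h

lemma my_upper {α : Type*} [Infinite α] (m : ℕ) :
    Cardinal.mk (BPart α m) ≤ Cardinal.mk α := by
  classical
  have hβ : Cardinal.mk {s : Set α // s.Finite} = Cardinal.mk α := my_mk_finsets
  have hβinf : Infinite {s : Set α // s.Finite} := by
    rw [Cardinal.infinite_iff, hβ]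
    exact Cardinal.aleph0_le_mk α
  have key : Cardinal.mk (BPart α m) ≤ Cardinal.mk (Finset {s : Set α // s.Finite}) := by
    have hfin : ∀ P : BPart α m, {s : {s : Set α // s.Finite} | (s : Set α) ∈ nsBlocks P.1}.Finite := by
      intro P
      exact Set.Finite.preimage (Subtype.val_injective.injOn) P.2.2.1
    apply Cardinal.mk_le_of_injective (f := fun P => (hfin P).toFinset)
    intro P Q h
    rw [Set.Finite.toFinset_inj] at h
    have hns : nsBlocks P.1 = nsBlocks Q.1 := by
      ext s
      constructor
      · intro hs
        have hsf : s.Finite := P.2.1.1 s hs.1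
        have : (⟨s, hsf⟩ : {s : Set α // s.Finite}) ∈ {s : {s : Set α // s.Finite} | (s : Set α) ∈ nsBlocks P.1} := hs
        rw [h] at this
        exact this
      · intro hs
        have hsf : s.Finite := Q.2.1.1 s hs.1
        have : (⟨s, hsf⟩ : {s : Set α // s.Finite}) ∈ {s : {s : Set α // s.Finite} | (s : Set α) ∈ nsBlocks Q.1} := hs
        rw [← h] at this
        exact this
    apply Subtype.ext
    rw [my_reconstruct P.2.1, my_reconstruct Q.2.1, hns]
  calc Cardinal.mk (BPart α m) ≤ Cardinal.mk (Finset {s : Set α // s.Finite}) := key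
    _ = Cardinal.mk {s : Set α // s.Finite} := Cardinal.mk_finset_of_infinite _
    _ = Cardinal.mk α := hβ

lemma my_lower {α : Type*} [Infinite α] (m : ℕ) (hm : 1 ≤ m) :
    Cardinal.mk α ≤ Cardinal.mk (BPart α m) := by
  classical
  set e := Infinite.natEmbedding α with he
  set E : Set α := e '' (Set.Iio (2*m)) with hE
  have hEfin : E.Finite := (Set.finite_Iio _).image _
  have hcompl : Cardinal.mk ↥(Eᶜ) = Cardinal.mk α := by
    apply Cardinal.mk_compl_of_infinite
    exact hEfin.lt_aleph0.trans_le (Cardinal.aleph0_le_mk α)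
  -- blocks
  set B : α → Set α := fun a => {e 0, e 1, a} with hB
  set pair : ℕ → Set α := fun i => {e (2*i), e (2*i+1)} with hpair
  set big : α → Set (Set α) := fun a => insert (B a) (pair '' (Set.Ico 1 m)) with hbig
  set P : α → Set (Set α) := fun a => big a ∪ (fun x => ({x} : Set α)) '' (⋃₀ big a)ᶜ with hP
  have hememE : ∀ k, k < 2*m → e k ∈ E := fun k hk => ⟨k, hk, rfl⟩
  have hmem : ∀ a : ↥(Eᶜ), P (a : α) ∈ BPart α m := by
    rintro ⟨a, ha⟩
    have hane : ∀ k, k < 2*m → a ≠ e k := by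
      intro k hk h
      exact ha (h ▸ hememE k hk)
    have h2m : 2 ≤ 2*m := by omega
    have he01 : e 0 ≠ e 1 := fun h => by simpa using e.injective h
    -- nontriviality of big blocks
    have hbignt : ∀ p ∈ big a, p.Nontrivial := by
      rintro p (rfl | ⟨i, hi, rfl⟩)
      · exact ⟨e 0, by simp [hB], e 1, by simp [hB], he01⟩
      · refine ⟨e (2*i), by simp [hpair], e (2*i+1), by simp [hpair], fun h => ?_⟩
        have := e.injective h; omega
    -- disjointness of big blocks
    have hbigdisj : ∀ p ∈ big a, ∀ q ∈ big a, p ≠ q → Disjoint p q := by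
      have hBp : ∀ i, i ∈ Set.Ico 1 m → Disjoint (B a) (pair i) := by
        rintro i ⟨hi1, hi2⟩
        rw [Set.disjoint_left]
        rintro x (rfl | rfl | rfl) (h | h)
        all_goals first
          | (have := e.injective h; omega)
          | (exact hane _ (by omega) h)
      rintro p (rfl | ⟨i, hi, rfl⟩) q (rfl | ⟨j, hj, rfl⟩) hpq
      · exact absurd rfl hpq
      · exact hBp j hj
      · exact (hBp i hi).symm
      · rw [Set.disjoint_left]
        have hij : i ≠ j := fun h => hpq (h ▸ rfl)
        rintro x (rfl | rfl) (h | h)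
        all_goals (have := e.injective h; omega)
    refine ⟨⟨?_, ?_, ?_, ?_⟩, ?_, ?_⟩
    · -- finite
      rintro p (hp | ⟨x, _, rfl⟩)
      · rcases hp with rfl | ⟨i, _, rfl⟩
        · exact (Set.finite_singleton _).insert _ |>.insert _
        · exact (Set.finite_singleton _).insert _
      · exact Set.finite_singleton _
    · -- nonempty
      rintro p (hp | ⟨x, _, rfl⟩)
      · exact (hbignt p hp).nonempty
      · exact Set.singleton_nonempty _
    · -- pairwise disjoint
      rintro p (hp | ⟨x, hx, rfl⟩) q (hq | ⟨y, hy, rfl⟩) hpq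
      · exact hbigdisj p hp q hq hpq
      · rw [Set.disjoint_singleton_right]
        exact fun h => hy ⟨p, hp, h⟩
      · rw [Set.disjoint_singleton_left]
        exact fun h => hx ⟨q, hq, h⟩
      · rw [Set.disjoint_singleton_left, Set.mem_singleton_iff]
        exact fun h => hpq (h ▸ rfl)
    · -- union
      apply Set.eq_univ_of_forall
      intro x
      by_cases hx : x ∈ ⋃₀ big a
      · obtain ⟨p, hp, hxp⟩ := hx
        exact ⟨p, Or.inl hp, hxp⟩
      · exact ⟨{x}, Or.inr ⟨x, hx, rfl⟩, rfl⟩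
    · -- nsBlocks finite
      have hns : nsBlocks (P a) = big a := by
        ext p
        constructor
        · rintro ⟨hp | ⟨x, _, rfl⟩, hnt⟩
          · exact hp
          · exact absurd hnt (Set.not_nontrivial_singleton)
        · intro hp
          exact ⟨Or.inl hp, hbignt p hp⟩
      rw [hns]
      exact ((Set.finite_Ico 1 m).image _).insert _
    · -- ncard
      have hns : nsBlocks (P a) = big a := by
        ext p
        constructor
        · rintro ⟨hp | ⟨x, _, rfl⟩, hnt⟩
          · exact hp
          · exact absurd hnt (Set.not_nontrivial_singleton)
        · intro hp
          exact ⟨Or.inl hp, hbignt p hp⟩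
      rw [hns, hbig]
      have hBnot : B a ∉ pair '' (Set.Ico 1 m) := by
        rintro ⟨i, ⟨hi1, hi2⟩, h⟩
        have : a ∈ pair i := h ▸ (by simp [hB] : a ∈ B a)
        rcases this with h' | h'
        · exact hane _ (by omega) h'
        · exact hane _ (by omega) h'
      have hinj : Set.InjOn pair (Set.Ico 1 m) := by
        rintro i _ j _ h
        have : e (2*i) ∈ pair j := h ▸ (by simp [hpair] : e (2*i) ∈ pair i)
        rcases this with h' | h'
        · have := e.injective h'; omega
        · have := e.injective h'; omega
      rw [Set.ncard_insert_of_notMem hBnot (((Set.finite_Ico 1 m).image _)),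
        Set.ncard_image_of_injOn hinj]
      have : (Set.Ico 1 m).ncard = m - 1 := by
        rw [← Finset.coe_Ico, Set.ncard_coe_finset, Nat.card_Ico]
      omega
  have hinj : Function.Injective (fun a : ↥(Eᶜ) => (⟨P (a : α), hmem a⟩ : BPart α m)) := by
    rintro ⟨a, ha⟩ ⟨b, hb⟩ h
    have hPab : P a = P b := congrArg Subtype.val h
    have hane : ∀ k, k < 2*m → a ≠ e k := fun k hk h' => ha (h' ▸ hememE k hk)
    have hbne : ∀ k, k < 2*m → b ≠ e k := fun k hk h' => hb (h' ▸ hememE k hk)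
    have hBa : B a ∈ P b := hPab ▸ (Or.inl (Or.inl rfl))
    have h2m : 2 ≤ 2*m := by omega
    rcases hBa with hBa | ⟨x, _, hx⟩
    · rcases hBa with hBa | ⟨i, ⟨hi1, hi2⟩, hBa⟩
      · -- B a = B b
        have haB : a ∈ B b := hBa ▸ (by simp [hB] : a ∈ B a)
        apply Subtype.ext
        rcases haB with h' | h' | h'
        · exact absurd h' (hane 0 (by omega))
        · exact absurd h' (hane 1 (by omega))
        · exact h'
      · -- B a = pair i, impossible
        exfalso
        have : a ∈ pair i := hBa ▸ (by simp [hB] : a ∈ B a)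
        rcases this with h' | h'
        · exact hane _ (by omega) h'
        · exact hane _ (by omega) h'
    · -- B a = {x}, impossible since e 0 ≠ e 1
      exfalso
      have h0 : e 0 ∈ B a := by simp [hB]
      have h1 : e 1 ∈ B a := by simp [hB]
      rw [← hx] at h0 h1
      have : e 0 = e 1 := h0.symm ▸ h1.symm ▸ rfl
      simpa using e.injective this
  calc Cardinal.mk α = Cardinal.mk ↥(Eᶜ) := hcompl.symm
    _ ≤ Cardinal.mk (BPart α m) := Cardinal.mk_le_of_injective hinj

/-- For every infinite cardinal `𝔞` and every non-zero natural number `n`,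
`2 ^ (fin(𝔞) ^ n) = 2 ^ ℬ_{2ⁿ−1}(𝔞)`, where `fin(A)ⁿ` is the `n`-fold
Cartesian power of the set of finite subsets of `A`. -/
theorem statement2 {α : Type*} [Infinite α] (n : ℕ) (hn : 1 ≤ n) :
    (2 : Cardinal) ^ Cardinal.mk (Fin n → {s : Set α // s.Finite}) =
      2 ^ Cardinal.mk ↥(BPart α (2 ^ n - 1)) := by
  have hβ : Cardinal.mk {s : Set α // s.Finite} = Cardinal.mk α := my_mk_finsets
  have hL : Cardinal.mk (Fin n → {s : Set α // s.Finite}) = Cardinal.mk α := by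
    rw [Cardinal.mk_arrow, Cardinal.mk_fin, Cardinal.lift_natCast, Cardinal.lift_id',
      Cardinal.power_natCast, hβ, Cardinal.power_nat_eq (Cardinal.aleph0_le_mk α) hn]
  have hm : 1 ≤ 2 ^ n - 1 := by
    have : 2 ^ 1 ≤ 2 ^ n := Nat.pow_le_pow_right (by norm_num) hn
    omega
  have hR : Cardinal.mk ↥(BPart α (2 ^ n - 1)) = Cardinal.mk α :=
    le_antisymm (my_upper _) (my_lower _ hm)
  rw [hL, hR]
end

section
/- Let A be an infinite set, n ≥ 1, and let m₁,…,mₙ and l₁,…,lₙ be natural numbers with mᵢ ≤ lᵢ for all i = 1,…,n. Then for every X ⊆ 𝒪_{m₁,…,mₙ}(A), the (m₁+⋯+mₙ+1)-fold iterate of δ applied to X is empty: δ^{(m₁+⋯+mₙ+1)}(X) = ∅. -/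
open Set

/-- `𝒪_{m₁,…,mₙ}(A)`: ordered `n`-tuples of pairwise disjoint subsets of `A`
of cardinalities `m 0, …, m (n-1)` respectively. -/
def OTupleCard (α : Type*) {n : ℕ} (m : Fin n → ℕ) : Set (Fin n → Set α) :=
  {p | (∀ i, (p i).Finite) ∧ (∀ i, (p i).ncard = m i) ∧
    ∀ i j, i ≠ j → Disjoint (p i) (p j)}

/-- The operator `γ`: all tuples of `𝒪_{l₁,…,lₙ}(A)` extending some tuple in `X`. -/
def gammaOp {α : Type*} {n : ℕ} (l : Fin n → ℕ) (X : Set (Fin n → Set α)) :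
    Set (Fin n → Set α) :=
  {q ∈ OTupleCard α l | ∃ p ∈ X, ∀ i, p i ⊆ q i}

/-- The operator `α`: all tuples of `𝒪_{m₁,…,mₙ}(A)` each of whose extensions in
`𝒪_{l₁,…,lₙ}(A)` lies in `γ(X)`. -/
def alphaOp {α : Type*} {n : ℕ} (m l : Fin n → ℕ) (X : Set (Fin n → Set α)) :
    Set (Fin n → Set α) :=
  {p ∈ OTupleCard α m |
    ∀ q ∈ OTupleCard α l, (∀ i, p i ⊆ q i) → q ∈ gammaOp l X}

/-- The operator `δ(X) = α(X) \ X`. -/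
def deltaOp {α : Type*} {n : ℕ} (m l : Fin n → ℕ) (X : Set (Fin n → Set α)) :
    Set (Fin n → Set α) :=
  alphaOp m l X \ X

namespace Stmt6


private theorem ramsey_key {C : Type*} [Finite C] (r : ℕ)
    (IH : ∀ (χ : Finset ℕ → C) (M : Set ℕ), M.Infinite →
      ∃ M' : Set ℕ, M' ⊆ M ∧ M'.Infinite ∧ ∃ c, ∀ S : Finset ℕ, ↑S ⊆ M' → S.card = r → χ S = c)
    (χ : Finset ℕ → C) (M : Set ℕ) (hM : M.Infinite) :
    ∃ (a : ℕ) (N : Set ℕ) (c : C), a ∈ M ∧ N ⊆ M ∧ N.Infinite ∧ (∀ x ∈ N, a < x) ∧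
      ∀ T : Finset ℕ, ↑T ⊆ N → T.card = r → χ (insert a T) = c := by
  obtain ⟨a, haM⟩ := hM.nonempty
  have hM' : (M ∩ Set.Ioi a).Infinite := by
    have he : M ∩ Set.Ioi a = M \ Set.Iic a := by
      ext x; simp only [Set.mem_inter_iff, Set.mem_Ioi, Set.mem_diff, Set.mem_Iic, not_le]
    rw [he]
    exact hM.diff (Set.finite_Iic a)
  obtain ⟨N, hNsub, hNinf, c, hc⟩ := IH (fun T => χ (insert a T)) _ hM'
  exact ⟨a, N, c, haM, hNsub.trans Set.inter_subset_left, hNinf,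
    fun x hx => (hNsub hx).2, hc⟩

private theorem ramsey {C : Type*} [Finite C] :
    ∀ (r : ℕ) (χ : Finset ℕ → C) (M : Set ℕ), M.Infinite →
      ∃ M' : Set ℕ, M' ⊆ M ∧ M'.Infinite ∧ ∃ c, ∀ S : Finset ℕ, ↑S ⊆ M' → S.card = r → χ S = c := by
  intro r
  induction r with
  | zero =>
    intro χ M hM
    refine ⟨M, subset_rfl, hM, χ ∅, fun S _ hS => ?_⟩
    rw [Finset.card_eq_zero.mp hS]
  | succ r IH =>
    intro χ M hM
    have key : ∀ N : {N : Set ℕ // N.Infinite}, ∃ p : ℕ × {N : Set ℕ // N.Infinite} × C,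
        p.1 ∈ N.1 ∧ p.2.1.1 ⊆ N.1 ∧ (∀ x ∈ p.2.1.1, p.1 < x) ∧
        ∀ T : Finset ℕ, ↑T ⊆ p.2.1.1 → T.card = r → χ (insert p.1 T) = p.2.2 := by
      rintro ⟨N, hN⟩
      obtain ⟨a, N', c, haM, hsub, hinf, hgt, hhom⟩ := ramsey_key r IH χ N hN
      exact ⟨(a, ⟨N', hinf⟩, c), haM, hsub, hgt, hhom⟩
    choose step hstep1 hstep2 hstep3 hstep4 using key
    set Mseq : ℕ → {N : Set ℕ // N.Infinite} :=
      fun k => (fun N => (step N).2.1)^[k] ⟨M, hM⟩ with hMseqdef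
    have hMsucc : ∀ k, Mseq (k+1) = (step (Mseq k)).2.1 := fun k =>
      Function.iterate_succ_apply' _ _ _
    set aseq : ℕ → ℕ := fun k => (step (Mseq k)).1 with haseqdef
    set cseq : ℕ → C := fun k => (step (Mseq k)).2.2 with hcseqdef
    have hnest : ∀ k, (Mseq (k+1)).1 ⊆ (Mseq k).1 := by
      intro k; rw [hMsucc]; exact hstep2 _
    have hnest' : ∀ k k', k ≤ k' → (Mseq k').1 ⊆ (Mseq k).1 := by
      intro k k' h
      induction k' with
      | zero => rw [Nat.le_zero.mp h]
      | succ k'' IH2 =>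
        rcases Nat.lt_or_ge k (k''+1) with hlt | hge
        · exact (hnest k'').trans (IH2 (Nat.lt_succ_iff.mp hlt))
        · rw [Nat.le_antisymm h hge]
    have hmem : ∀ k, aseq k ∈ (Mseq k).1 := fun k => hstep1 _
    have hgt : ∀ k, ∀ x ∈ (Mseq (k+1)).1, aseq k < x := by
      intro k; rw [hMsucc]; exact hstep3 _
    have hamono : ∀ k k', k < k' → aseq k < aseq k' := by
      intro k k' h
      exact hgt k _ (hnest' (k+1) k' h (hmem k'))
    have hsubM : ∀ k, (Mseq k).1 ⊆ M := fun k => hnest' 0 k (Nat.zero_le _)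
    have hhomog : ∀ k, ∀ T : Finset ℕ, ↑T ⊆ (Mseq (k+1)).1 → T.card = r →
        χ (insert (aseq k) T) = cseq k := by
      intro k; rw [hMsucc]; exact hstep4 _
    have hpig : ∃ c : C, {k | cseq k = c}.Infinite := by
      by_contra h
      push_neg at h
      have hcov : (Set.univ : Set ℕ) ⊆ ⋃ c : C, {k | cseq k = c} :=
        fun k _ => Set.mem_iUnion.mpr ⟨cseq k, rfl⟩
      exact Set.infinite_univ ((Set.finite_iUnion h).subset hcov)
    obtain ⟨c, hcinf⟩ := hpig
    refine ⟨aseq '' {k | cseq k = c}, ?_, ?_, c, ?_⟩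
    · rintro _ ⟨k, _, rfl⟩; exact hsubM k (hmem k)
    · exact hcinf.image (fun k _ k' _ h =>
        le_antisymm (not_lt.mp fun hlt => absurd h (hamono _ _ hlt).ne')
          (not_lt.mp fun hlt => absurd h (hamono _ _ hlt).ne))
    · intro S hS hcard
      have hSne : S.Nonempty := Finset.card_pos.mp (by omega)
      set x₀ := S.min' hSne with hx₀def
      have hx₀S : x₀ ∈ S := S.min'_mem hSne
      obtain ⟨k₀, hk₀c, hk₀⟩ := hS hx₀S
      set T := S.erase x₀ with hTdef
      have hTcard : T.card = r := by
        rw [hTdef, Finset.card_erase_of_mem hx₀S, hcard]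
        omega
      have hTsub : ↑T ⊆ (Mseq (k₀+1)).1 := by
        intro y hyT
        obtain ⟨hyne, hyS⟩ := Finset.mem_erase.mp hyT
        obtain ⟨k', _, rfl⟩ := hS hyS
        have hlt : x₀ < aseq k' := lt_of_le_of_ne (S.min'_le _ hyS) (Ne.symm hyne)
        have hkk : k₀ < k' := by
          by_contra hcon
          push_neg at hcon
          rcases eq_or_lt_of_le hcon with rfl | hlt2
          · rw [hk₀] at hlt; exact lt_irrefl _ hlt
          · have := hamono _ _ hlt2
            rw [hk₀] at this
            omega
        exact hnest' (k₀+1) k' hkk (hmem k')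
      calc χ S = χ (insert (aseq k₀) T) := by rw [hk₀, hTdef, Finset.insert_erase hx₀S]
      _ = cseq k₀ := hhomog k₀ T hTsub hTcard
      _ = c := hk₀c

/-- Simultaneous Ramsey for all cardinalities up to `R`. -/
private theorem ramsey_below {C : Type*} [Finite C] (R : ℕ) (χ : Finset ℕ → C) :
    ∃ M' : Set ℕ, M'.Infinite ∧ ∃ c : ℕ → C,
      ∀ r ≤ R, ∀ S : Finset ℕ, ↑S ⊆ M' → S.card = r → χ S = c r := by
  induction R with
  | zero =>
    obtain ⟨M', _, hinf, c, hc⟩ := ramsey 0 χ Set.univ Set.infinite_univ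
    exact ⟨M', hinf, fun _ => c, fun r hr S hS hcard => by
      rw [Nat.le_zero.mp hr] at hcard ⊢; exact hc S hS hcard⟩
  | succ R IH =>
    obtain ⟨M', hinf, c, hc⟩ := IH
    obtain ⟨M'', hsub, hinf'', c', hc'⟩ := ramsey (R+1) χ M' hinf
    refine ⟨M'', hinf'', fun r => if r = R + 1 then c' else c r, fun r hr S hS hcard => ?_⟩
    dsimp only
    rcases Nat.lt_or_ge r (R+1) with hlt | hge
    · rw [if_neg (by omega)]
      exact hc r (by omega) S (hS.trans hsub) hcard
    · have : r = R + 1 := le_antisymm hr hge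
      subst this
      rw [if_pos rfl]
      exact hc' S hS hcard



/-- Rank of `x` in `S`: number of elements of `S` smaller than `x`. -/
private def nrank (S : Finset ℕ) (x : ℕ) : ℕ := (S.filter (· < x)).card

/-- The segment of `S` whose ranks lie in `[a, b)`. -/
private def seg (S : Finset ℕ) (a b : ℕ) : Finset ℕ :=
  S.filter fun x => a ≤ nrank S x ∧ nrank S x < b

private theorem off_add_le {n : ℕ} (D : Fin n → Finset ℕ) {j i : Fin n} (h : j < i) :
    (∑ j' ∈ Finset.univ.filter (fun j' => j' < j), (D j').card) + (D j).card ≤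
      ∑ j' ∈ Finset.univ.filter (fun j' => j' < i), (D j').card := by
  have hnot : j ∉ Finset.univ.filter (fun j' => j' < j) := by simp
  have hsub : insert j (Finset.univ.filter (fun j' => j' < j)) ⊆
      Finset.univ.filter (fun j' => j' < i) := by
    intro y hy
    rcases Finset.mem_insert.mp hy with rfl | hy'
    · simp [h]
    · simp only [Finset.mem_filter, Finset.mem_univ, true_and] at hy' ⊢
      exact hy'.trans h
  calc (∑ j' ∈ Finset.univ.filter (fun j' => j' < j), (D j').card) + (D j).card
      = ∑ j' ∈ insert j (Finset.univ.filter (fun j' => j' < j)), (D j').card := by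
        rw [Finset.sum_insert hnot]; ring
    _ ≤ _ := Finset.sum_le_sum_of_subset hsub

private theorem disjoint_of_stacked {n : ℕ} {D : Fin n → Finset ℕ}
    (hst : ∀ i j : Fin n, i < j → ∀ x ∈ D i, ∀ y ∈ D j, x < y)
    {i j : Fin n} (h : i ≠ j) : Disjoint (D i) (D j) := by
  rw [Finset.disjoint_left]
  intro x hxi hxj
  rcases lt_or_gt_of_ne h with hlt | hgt
  · exact lt_irrefl x (hst i j hlt x hxi x hxj)
  · exact lt_irrefl x (hst j i hgt x hxj x hxi)

private theorem nrank_of_mem {n : ℕ} {D : Fin n → Finset ℕ}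
    (hst : ∀ i j : Fin n, i < j → ∀ x ∈ D i, ∀ y ∈ D j, x < y)
    {i : Fin n} {x : ℕ} (hx : x ∈ D i) :
    nrank (Finset.univ.biUnion D) x
      = (∑ j ∈ Finset.univ.filter (fun j => j < i), (D j).card)
        + ((D i).filter (· < x)).card := by
  have hfil : (Finset.univ.biUnion D).filter (· < x)
      = (Finset.univ.filter (fun j => j < i)).biUnion D ∪ (D i).filter (· < x) := by
    ext y
    simp only [Finset.mem_filter, Finset.mem_biUnion, Finset.mem_union, Finset.mem_univ,
      true_and]
    constructor
    · rintro ⟨⟨j, hyj⟩, hyx⟩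
      rcases lt_trichotomy j i with hlt | rfl | hgt
      · exact Or.inl ⟨j, hlt, hyj⟩
      · exact Or.inr ⟨hyj, hyx⟩
      · exact absurd (hst i j hgt x hx y hyj) (by omega)
    · rintro (⟨j, hji, hyj⟩ | ⟨hyi, hyx⟩)
      · exact ⟨⟨j, hyj⟩, hst j i hji y hyj x hx⟩
      · exact ⟨⟨i, hyi⟩, hyx⟩
  have hdisj2 : Disjoint ((Finset.univ.filter (fun j => j < i)).biUnion D)
      ((D i).filter (· < x)) := by
    rw [Finset.disjoint_left]
    intro y hy hy'
    obtain ⟨j, hj, hyj⟩ := Finset.mem_biUnion.mp hy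
    have hji : j < i := (Finset.mem_filter.mp hj).2
    exact (Finset.disjoint_left.mp (disjoint_of_stacked hst hji.ne)) hyj
      (Finset.mem_of_mem_filter y hy')
  rw [nrank, hfil, Finset.card_union_of_disjoint hdisj2,
    Finset.card_biUnion]
  intro j₁ h₁ j₂ h₂ hne
  exact disjoint_of_stacked hst hne

private theorem seg_recover {n : ℕ} {D : Fin n → Finset ℕ}
    (hst : ∀ i j : Fin n, i < j → ∀ x ∈ D i, ∀ y ∈ D j, x < y) (i : Fin n) :
    seg (Finset.univ.biUnion D)
      (∑ j ∈ Finset.univ.filter (fun j => j < i), (D j).card)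
      ((∑ j ∈ Finset.univ.filter (fun j => j < i), (D j).card) + (D i).card) = D i := by
  ext x
  simp only [seg, Finset.mem_filter, Finset.mem_biUnion, Finset.mem_univ, true_and]
  constructor
  · rintro ⟨⟨j, hxj⟩, hlow, hhigh⟩
    rcases lt_trichotomy j i with hlt | rfl | hgt
    · exfalso
      have h1 := nrank_of_mem hst hxj
      have h2 : ((D j).filter (· < x)).card < (D j).card := by
        refine Finset.card_lt_card ?_
        rw [Finset.filter_ssubset]
        exact ⟨x, hxj, by omega⟩
      have h3 := off_add_le D hlt
      omega
    · exact hxj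
    · exfalso
      have h1 := nrank_of_mem hst hxj
      have h3 := off_add_le D hgt
      omega
  · intro hx
    have h1 := nrank_of_mem hst hx
    have h2 : ((D i).filter (· < x)).card < (D i).card := by
      refine Finset.card_lt_card ?_
      rw [Finset.filter_ssubset]
      exact ⟨x, hx, by omega⟩
    exact ⟨⟨i, hx⟩, by omega, by omega⟩


private theorem sum_filter_lt_add_le {n : ℕ} (f : Fin n → ℕ) {j i : Fin n} (h : j < i) :
    (f j) + (∑ j' ∈ Finset.univ.filter (fun j' => j' < j), f j') ≤
      ∑ j' ∈ Finset.univ.filter (fun j' => j' < i), f j' := by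
  have hnot : j ∉ Finset.univ.filter (fun j' => j' < j) := by simp
  have hsub : insert j (Finset.univ.filter (fun j' => j' < j)) ⊆
      Finset.univ.filter (fun j' => j' < i) := by
    intro y hy
    rcases Finset.mem_insert.mp hy with rfl | hy'
    · simp [h]
    · simp only [Finset.mem_filter, Finset.mem_univ, true_and] at hy' ⊢
      exact hy'.trans h
  calc f j + ∑ j' ∈ Finset.univ.filter (fun j' => j' < j), f j'
      = ∑ j' ∈ insert j (Finset.univ.filter (fun j' => j' < j)), f j' :=
        (Finset.sum_insert hnot).symm
    _ ≤ _ := Finset.sum_le_sum_of_subset hsub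

end Stmt6

/-- For `mᵢ ≤ lᵢ` and `X ⊆ 𝒪_{m₁,…,mₙ}(A)`, the `(m₁+⋯+mₙ+1)`-fold iterate of
`δ` applied to `X` is empty. -/
theorem statement6 {α : Type*} [Infinite α] (n : ℕ) (hn : 1 ≤ n)
    (m l : Fin n → ℕ) (hml : ∀ i, m i ≤ l i)
    (X : Set (Fin n → Set α)) (hX : X ⊆ OTupleCard α m) :
    (deltaOp m l)^[(∑ i, m i) + 1] X = ∅ := by
  classical
  rw [Set.eq_empty_iff_forall_notMem]
  intro p hp
  set s := ∑ i, m i with hsdef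
  set W : ℕ → Set (Fin n → Set α) := fun k => (deltaOp m l)^[k] X with hWdef
  have hp1 : p ∈ W (s + 1) := hp
  have hWsucc : ∀ k, W (k + 1) = deltaOp m l (W k) := fun k =>
    Function.iterate_succ_apply' _ _ _
  have hWO : ∀ k, W k ⊆ OTupleCard α m := by
    intro k
    cases k with
    | zero => exact hX
    | succ k => rw [hWsucc]; exact fun y hy => hy.1.1
  obtain ⟨hpfin, hpcard, hpdisj⟩ := hWO (s + 1) hp1
  set K : Set α := ⋃ i, p i with hKdef
  have hKfin : K.Finite := Set.finite_iUnion fun i => hpfin i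
  have hpK : ∀ i, p i ⊆ K := fun i => Set.subset_iUnion (fun j => p j) i
  have hKcompl : (Kᶜ : Set α).Infinite := hKfin.infinite_compl
  set f : ℕ → α := fun k => ((Set.Infinite.natEmbedding _ hKcompl) k : α) with hfdef
  have hfinj : Function.Injective f := fun a b hab => by
    have := (Set.Infinite.natEmbedding _ hKcompl).injective (Subtype.val_injective hab)
    exact this
  have hfK : ∀ x, f x ∉ K := fun x => ((Set.Infinite.natEmbedding _ hKcompl) x).2
  -- the finitely many colors
  haveI hfinsub : ∀ i : Fin n, Finite ↥(p i) := fun i => (hpfin i).to_subtype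
  set tr : (∀ i : Fin n, Set ↥(p i)) → Fin n → Set α :=
    fun σ i => Subtype.val '' (σ i) with htrdef
  set rc : (∀ i : Fin n, Set ↥(p i)) → Fin n → ℕ :=
    fun σ i => m i - (tr σ i).ncard with hrcdef
  set offc : (∀ i : Fin n, Set ↥(p i)) → Fin n → ℕ :=
    fun σ i => ∑ j ∈ Finset.univ.filter (fun j => j < i), rc σ j with hoffcdef
  set χ : Finset ℕ → (∀ i : Fin n, Set ↥(p i)) → Fin (s + 2) → Bool :=
    fun S σ k =>
      decide ((fun i => tr σ i ∪ f '' ↑(Stmt6.seg S (offc σ i) (offc σ i + rc σ i))) ∈ W k)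
    with hχdef
  obtain ⟨M', hM'inf, c, hc⟩ := Stmt6.ramsey_below s χ
  -- enumeration of M'
  set e : ℕ → ℕ := Nat.nth (· ∈ M') with hedef
  have hM'inf' : (setOf (· ∈ M')).Infinite := hM'inf
  have hemono : StrictMono e := fun a b hab => (Nat.nth_lt_nth hM'inf').mpr hab
  have heinj : Function.Injective e := hemono.injective
  have heM : ∀ x, e x ∈ M' := fun x => Nat.nth_mem_of_infinite hM'inf' x
  set h : ℕ → α := fun x => f (e x) with hhdef
  have hhinj : Function.Injective h := hfinj.comp heinj
  have hhK : ∀ x, h x ∉ K := fun x => hfK (e x)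
  -- blocks
  set cap : Fin n → ℕ := fun i => m i + (s + 2) * (l i - m i) with hcapdef
  set o : Fin n → ℕ := fun i => ∑ j ∈ Finset.univ.filter (fun j => j < i), cap j with hodef
  have hblock : ∀ i j : Fin n, i < j → o i + cap i ≤ o j := by
    intro i j hij
    have := Stmt6.sum_filter_lt_add_le cap hij
    simp only [hodef]
    omega
  -- generic helpers
  have himdisj : ∀ (S T : Finset ℕ), (∀ a ∈ S, a ∉ T) → Disjoint (h '' ↑S) (h '' ↑T) := by
    intro S T hST
    rw [Set.disjoint_left]
    rintro w ⟨u, huS, rfl⟩ ⟨v, hvT, hvw⟩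
    have : v = u := hhinj hvw
    subst this
    exact hST v huS hvT
  have hKimdisj : ∀ (t' : Set α) (T : Finset ℕ), t' ⊆ K → Disjoint t' (h '' ↑T) := by
    intro t' T ht'
    rw [Set.disjoint_left]
    rintro w hw ⟨u, _, rfl⟩
    exact hhK u (ht' hw)
  have himfin : ∀ (T : Finset ℕ), (h '' ↑T).Finite := fun T => T.finite_toSet.image h
  have himncard : ∀ (T : Finset ℕ), (h '' ↑T).ncard = T.card := by
    intro T
    rw [Set.ncard_image_of_injective _ hhinj, Set.ncard_coe_finset]
  -- the homogeneity lemma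
  have equi : ∀ (t : Fin n → Set α), (∀ i, t i ⊆ p i) → ∀ k : ℕ, k ≤ s + 1 →
      ∀ D D' : Fin n → Finset ℕ,
      (∀ i, ∀ x ∈ D i, o i ≤ x ∧ x < o i + cap i) →
      (∀ i, ∀ x ∈ D' i, o i ≤ x ∧ x < o i + cap i) →
      (∀ i, (D i).card = m i - (t i).ncard) →
      (∀ i, (D' i).card = m i - (t i).ncard) →
      (((fun i => t i ∪ h '' ↑(D i)) ∈ W k) ↔ ((fun i => t i ∪ h '' ↑(D' i)) ∈ W k)) := by
    intro t ht k hk D D' hDb hD'b hDc hD'c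
    set σ : ∀ i : Fin n, Set ↥(p i) := fun i => {x : ↥(p i) | ↑x ∈ t i} with hσdef
    have htr : ∀ i, tr σ i = t i := by
      intro i
      have h1 : Subtype.val '' {x : ↥(p i) | ↑x ∈ t i} = p i ∩ t i := by
        ext y
        constructor
        · rintro ⟨⟨y', hy'⟩, hyt, rfl⟩; exact ⟨hy', hyt⟩
        · rintro ⟨hyp, hyt⟩; exact ⟨⟨y, hyp⟩, hyt, rfl⟩
      simp only [htrdef, hσdef]
      rw [h1]
      exact Set.inter_eq_self_of_subset_right (ht i)
    have hrct : ∀ i, rc σ i = m i - (t i).ncard := by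
      intro i; simp only [hrcdef]; rw [htr i]
    set R := ∑ i, (m i - (t i).ncard) with hRdef
    have hRs : R ≤ s := by
      rw [hRdef, hsdef]
      exact Finset.sum_le_sum fun i _ => Nat.sub_le _ _
    set kk : Fin (s + 2) := ⟨k, by omega⟩ with hkkdef
    have main : ∀ E : Fin n → Finset ℕ,
        (∀ i, ∀ x ∈ E i, o i ≤ x ∧ x < o i + cap i) →
        (∀ i, (E i).card = m i - (t i).ncard) →
        χ (Finset.image e (Finset.univ.biUnion E)) σ kk
          = decide ((fun i => t i ∪ h '' ↑(E i)) ∈ W k) := by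
      intro E hEb hEc
      have hstack : ∀ i j : Fin n, i < j → ∀ x ∈ E i, ∀ y ∈ E j, x < y := by
        intro i j hij x hx y hy
        have h1 := (hEb i x hx).2
        have h2 := (hEb j y hy).1
        have h3 := hblock i j hij
        omega
      have hstackim : ∀ i j : Fin n, i < j →
          ∀ x ∈ (E i).image e, ∀ y ∈ (E j).image e, x < y := by
        intro i j hij x hx y hy
        obtain ⟨u, hu, rfl⟩ := Finset.mem_image.mp hx
        obtain ⟨v, hv, rfl⟩ := Finset.mem_image.mp hy
        exact hemono (hstack i j hij u hu v hv)
      have hbiu : Finset.image e (Finset.univ.biUnion E)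
          = Finset.univ.biUnion (fun j => (E j).image e) := Finset.biUnion_image
      have hcardim : ∀ j, ((E j).image e).card = rc σ j := by
        intro j
        rw [Finset.card_image_of_injective _ heinj, hEc j, hrct j]
      have hseg : ∀ i, Stmt6.seg (Finset.image e (Finset.univ.biUnion E))
          (offc σ i) (offc σ i + rc σ i) = (E i).image e := by
        intro i
        have hoffeq : offc σ i
            = ∑ j ∈ Finset.univ.filter (fun j => j < i), ((E j).image e).card := by
          simp only [hoffcdef]
          exact Finset.sum_congr rfl fun j _ => (hcardim j).symm
        rw [hbiu, hoffeq, ← hcardim i]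
        exact Stmt6.seg_recover hstackim i
      have htfun : (fun i => tr σ i ∪ f ''
          ↑(Stmt6.seg (Finset.image e (Finset.univ.biUnion E))
            (offc σ i) (offc σ i + rc σ i)))
          = (fun i => t i ∪ h '' ↑(E i)) := by
        funext i
        rw [hseg i, htr i, Finset.coe_image, Set.image_image]
      simp only [hχdef]
      rw [htfun]
    -- cardinality and membership for the Ramsey conclusion
    have hcards : ∀ E : Fin n → Finset ℕ,
        (∀ i, ∀ x ∈ E i, o i ≤ x ∧ x < o i + cap i) →
        (∀ i, (E i).card = m i - (t i).ncard) →
        (Finset.image e (Finset.univ.biUnion E)).card = R ∧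
        ↑(Finset.image e (Finset.univ.biUnion E)) ⊆ M' := by
      intro E hEb hEc
      have hstack : ∀ i j : Fin n, i < j → ∀ x ∈ E i, ∀ y ∈ E j, x < y := by
        intro i j hij x hx y hy
        have h1 := (hEb i x hx).2
        have h2 := (hEb j y hy).1
        have h3 := hblock i j hij
        omega
      constructor
      · rw [Finset.card_image_of_injective _ heinj, Finset.card_biUnion
          (fun i _ j _ hij => Stmt6.disjoint_of_stacked hstack hij)]
        rw [hRdef]
        exact Finset.sum_congr rfl fun i _ => hEc i
      · intro x hx
        obtain ⟨u, _, rfl⟩ := Finset.mem_image.mp (by exact_mod_cast hx)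
        exact heM u
    have h1 := hc R hRs _ (hcards D hDb hDc).2 (hcards D hDb hDc).1
    have h2 := hc R hRs _ (hcards D' hD'b hD'c).2 (hcards D' hD'b hD'c).1
    have h3 : χ (Finset.image e (Finset.univ.biUnion D)) σ kk
        = χ (Finset.image e (Finset.univ.biUnion D')) σ kk := by rw [h1, h2]
    rw [main D hDb hDc, main D' hD'b hD'c] at h3
    exact decide_eq_decide.mp h3
  -- the descending chain
  have chain : ∀ d : ℕ, d ≤ s + 1 →
      ∃ (y : Fin n → Set α) (t : Fin n → Set α) (D : Fin n → Finset ℕ),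
      y ∈ W (s + 1 - d) ∧
      (∀ i, t i ⊆ p i) ∧
      (∀ i, y i = t i ∪ h '' ↑(D i)) ∧
      (∀ i, ∀ x ∈ D i, o i ≤ x ∧ x < o i + m i + d * (l i - m i)) ∧
      (∑ i, (t i).ncard) + d ≤ s := by
    intro d
    induction d with
    | zero =>
      intro _
      refine ⟨p, p, fun _ => ∅, by simpa using hp1, fun i => subset_rfl, ?_, ?_, ?_⟩
      · intro i; simp
      · intro i x hx; simp at hx
      · simp only [Nat.add_zero, hsdef]
        exact le_of_eq (Finset.sum_congr rfl fun i _ => hpcard i)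
    | succ d IH =>
      intro hd1
      obtain ⟨y, t, D, hyW, htp, hyeq, hDblk, hsum⟩ := IH (by omega)
      have htK : ∀ i, t i ⊆ K := fun i => (htp i).trans (hpK i)
      have htfin : ∀ i, (t i).Finite := fun i => hKfin.subset (htK i)
      -- unfold one delta
      have hidx : s + 1 - d = (s - d) + 1 := by omega
      rw [hidx, hWsucc] at hyW
      obtain ⟨hyA, hyN⟩ := hyW
      obtain ⟨hyO, hyext⟩ := hyA
      obtain ⟨hyfin, hycard, hydisj⟩ := hyO
      -- cards of D
      have hDcards : ∀ i, (t i).ncard + (D i).card = m i := by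
        intro i
        rw [← hycard i, hyeq i, Set.ncard_union_eq (hKimdisj _ _ (htK i)) (htfin i)
          (himfin _), himncard]
      -- fresh extension
      set F : Fin n → Finset ℕ := fun i =>
        Finset.Ico (o i + m i + d * (l i - m i)) (o i + m i + (d + 1) * (l i - m i))
        with hFdef
      have hFblk : ∀ i, ∀ x ∈ F i, o i + m i + d * (l i - m i) ≤ x ∧
          x < o i + m i + (d + 1) * (l i - m i) := by
        intro i x hx
        exact Finset.mem_Ico.mp hx
      have hFcard : ∀ i, (F i).card = l i - m i := by
        intro i
        rw [hFdef]
        rw [Nat.card_Ico]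
        ring_nf
        omega
      have hDF : ∀ i, ∀ a ∈ D i, a ∉ F i := by
        intro i a ha haF
        have h1 := (hDblk i a ha).2
        have h2 := (hFblk i a haF).1
        omega
      have hcapblk : ∀ i (d' : ℕ), d' ≤ s + 1 → ∀ x : ℕ,
          (o i ≤ x ∧ x < o i + m i + d' * (l i - m i)) → (o i ≤ x ∧ x < o i + cap i) := by
        intro i d' hd' x hx
        refine ⟨hx.1, ?_⟩
        have : m i + d' * (l i - m i) ≤ cap i := by
          simp only [hcapdef]
          have : d' * (l i - m i) ≤ (s + 2) * (l i - m i) :=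
            Nat.mul_le_mul_right _ (by omega)
          omega
        omega
      -- the extension q
      set q : Fin n → Set α := fun i => y i ∪ h '' ↑(F i) with hqdef
      have hDiblk : ∀ i, ∀ x ∈ D i, o i ≤ x ∧ x < o i + cap i :=
        fun i x hx => hcapblk i d (by omega) x (hDblk i x hx)
      have hFiblk : ∀ i, ∀ x ∈ F i, o i ≤ x ∧ x < o i + cap i := by
        intro i x hx
        have := hFblk i x hx
        exact hcapblk i (d + 1) (by omega) x ⟨by omega, this.2⟩
      have hyinter : ∀ i, Disjoint (y i) (h '' ↑(F i)) := by
        intro i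
        rw [hyeq i, Set.disjoint_union_left]
        exact ⟨hKimdisj _ _ (htK i), himdisj _ _ (hDF i)⟩
      have hblkdisj : ∀ i i' : Fin n, i ≠ i' → ∀ x,
          (o i ≤ x ∧ x < o i + cap i) → (o i' ≤ x ∧ x < o i' + cap i') → False := by
        intro i i' hne x hx hx'
        rcases lt_or_gt_of_ne hne with hlt | hgt
        · have := hblock i i' hlt; omega
        · have := hblock i' i hgt; omega
      have hqO : q ∈ OTupleCard α l := by
        refine ⟨?_, ?_, ?_⟩
        · intro i
          exact ((hyfin i).union (himfin _))
        · intro i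
          rw [hqdef]
          rw [Set.ncard_union_eq (hyinter i) (hyfin i) (himfin _), himncard, hycard i,
            hFcard i]
          have := hml i
          omega
        · intro i j hij
          simp only [hqdef]
          apply Set.disjoint_union_left.mpr
          constructor
          · apply Set.disjoint_union_right.mpr
            refine ⟨hydisj i j hij, ?_⟩
            rw [hyeq i]
            apply Set.disjoint_union_left.mpr
            exact ⟨hKimdisj _ _ (htK i), himdisj _ _ fun a ha haF =>
              hblkdisj i j hij a (hDiblk i a ha) (hFiblk j a haF)⟩
          · apply Set.disjoint_union_right.mpr
            constructor
            · apply Disjoint.symm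
              rw [hyeq j]
              apply Set.disjoint_union_left.mpr
              exact ⟨hKimdisj _ _ (htK j), himdisj _ _ fun a ha haF =>
                hblkdisj j i hij.symm a (hDiblk j a ha) (hFiblk i a haF)⟩
            · exact himdisj _ _ fun a ha haF =>
                hblkdisj i j hij a (hFiblk i a ha) (hFiblk j a haF)
      have hyq : ∀ i, y i ⊆ q i := fun i => Set.subset_union_left
      obtain ⟨hq'O, z, hzW, hzq⟩ := hyext q hqO hyq
      obtain ⟨hzfin, hzcard, hzdisj⟩ := hWO (s - d) hzW
      -- decompose z
      set t' : Fin n → Set α := fun i => z i ∩ K with ht'def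
      set D'' : Fin n → Finset ℕ := fun i => (D i ∪ F i).filter (fun x => h x ∈ z i)
        with hD''def
      have hqK : ∀ i, q i ∩ K = t i := by
        intro i
        show (y i ∪ h '' ↑(F i)) ∩ K = t i
        rw [hyeq i]
        ext w
        constructor
        · rintro ⟨hw1, hw2⟩
          rcases hw1 with (hw1 | hw1) | hw1
          · exact hw1
          · obtain ⟨u, _, rfl⟩ := hw1; exact absurd hw2 (hhK u)
          · obtain ⟨u, _, rfl⟩ := hw1; exact absurd hw2 (hhK u)
        · intro hw
          exact ⟨Or.inl (Or.inl hw), htK i hw⟩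
      have ht'sub : ∀ i, t' i ⊆ t i := by
        intro i
        rw [ht'def, ← hqK i]
        exact Set.inter_subset_inter_left _ (hzq i)
      have ht'p : ∀ i, t' i ⊆ p i := fun i => (ht'sub i).trans (htp i)
      have hzeq : ∀ i, z i = t' i ∪ h '' ↑(D'' i) := by
        intro i
        ext w
        constructor
        · intro hw
          have hwq : w ∈ (t i ∪ h '' ↑(D i)) ∪ h '' ↑(F i) := by
            have hwq0 : w ∈ y i ∪ h '' ↑(F i) := hzq i hw
            rw [hyeq i] at hwq0
            exact hwq0
          rcases hwq with (hw1 | hw1) | hw1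
          · exact Or.inl ⟨hw, htK i hw1⟩
          · obtain ⟨u, hu, rfl⟩ := hw1
            refine Or.inr ⟨u, ?_, rfl⟩
            simp only [hD''def, Finset.coe_filter, Finset.mem_union]
            exact ⟨Or.inl (by exact_mod_cast hu), hw⟩
          · obtain ⟨u, hu, rfl⟩ := hw1
            refine Or.inr ⟨u, ?_, rfl⟩
            simp only [hD''def, Finset.coe_filter, Finset.mem_union]
            exact ⟨Or.inr (by exact_mod_cast hu), hw⟩
        · intro hw
          rcases hw with hw | hw
          · exact hw.1
          · obtain ⟨u, hu, rfl⟩ := hw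
            simp only [hD''def, Finset.coe_filter, Finset.mem_union] at hu
            exact hu.2
      have hD''blk : ∀ i, ∀ x ∈ D'' i, o i ≤ x ∧ x < o i + m i + (d + 1) * (l i - m i) := by
        intro i x hx
        simp only [hD''def, Finset.mem_filter, Finset.mem_union] at hx
        rcases hx.1 with hx1 | hx1
        · have := hDblk i x hx1
          have hle : d * (l i - m i) ≤ (d+1) * (l i - m i) :=
            Nat.mul_le_mul_right _ (by omega)
          omega
        · have := hFblk i x hx1
          omega
      have ht'fin : ∀ i, (t' i).Finite := fun i => hKfin.subset (fun w hw => hw.2)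
      have hD''cards : ∀ i, (t' i).ncard + (D'' i).card = m i := by
        intro i
        rw [← hzcard i, hzeq i, Set.ncard_union_eq (hKimdisj _ _ (fun w hw => hw.2))
          (ht'fin i) (himfin _), himncard]
      -- the strictness dichotomy
      have ht'le : ∀ i, (t' i).ncard ≤ (t i).ncard := fun i =>
        Set.ncard_le_ncard (ht'sub i) (htfin i)
      by_cases hstall : ∑ i, (t' i).ncard = ∑ i, (t i).ncard
      · exfalso
        have hteq : ∀ i, t' i = t i := by
          intro i
          have hall := (Finset.sum_eq_sum_iff_of_le (fun i _ => ht'le i)).mp hstall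
          refine Set.eq_of_subset_of_ncard_le (ht'sub i) ?_ (htfin i)
          exact le_of_eq (hall i (Finset.mem_univ i)).symm
        have hDc : ∀ i, (D i).card = m i - (t i).ncard := by
          intro i; have := hDcards i; omega
        have hD''c : ∀ i, (D'' i).card = m i - (t i).ncard := by
          intro i
          have h1 := hD''cards i
          rw [hteq i] at h1
          omega
        have hiff := equi t htp (s + 1 - d) (by omega) D D'' hDiblk
          (fun i x hx => hcapblk i (d+1) (by omega) x (hD''blk i x hx)) hDc hD''c
        have hyW' : (fun i => t i ∪ h '' ↑(D i)) ∈ W (s + 1 - d) := by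
          have : (fun i => t i ∪ h '' ↑(D i)) = y := funext fun i => (hyeq i).symm
          rw [this, hidx, hWsucc]
          exact ⟨⟨⟨hyfin, hycard, hydisj⟩, hyext⟩, hyN⟩
        have hzW' : z ∈ W (s + 1 - d) := by
          have : (fun i => t i ∪ h '' ↑(D'' i)) = z := by
            funext i
            rw [← hteq i]
            exact (hzeq i).symm
          rw [← this]
          exact hiff.mp hyW'
        rw [hidx, hWsucc] at hzW'
        exact hzW'.2 hzW
      · have hstrict : (∑ i, (t' i).ncard) + 1 ≤ ∑ i, (t i).ncard := by
          have hle : (∑ i, (t' i).ncard) ≤ ∑ i, (t i).ncard :=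
            Finset.sum_le_sum fun i _ => ht'le i
          omega
        refine ⟨z, t', D'', ?_, ht'p, hzeq, hD''blk, by omega⟩
        have : s + 1 - (d + 1) = s - d := by omega
        rw [this]
        exact hzW
  obtain ⟨y, t, D, _, _, _, _, hfin⟩ := chain (s + 1) le_rfl
  omega
end

section
/- Product Ramsey theorem: for every n ≥ 1 and all natural numbers j₁,…,jₙ, c, r with c ≠ 0, there exists a natural number R such that for all finite sets S₁,…,Sₙ with |Sᵢ| ≥ R for each i = 1,…,n and all sets Y₁,…,Y_c, if [S₁]^{j₁} × ⋯ × [Sₙ]^{jₙ} = Y₁ ∪ ⋯ ∪ Y_c, then for each i = 1,…,n there exists Tᵢ ∈ [Sᵢ]^r such that [T₁]^{j₁} × ⋯ × [Tₙ]^{jₙ} ⊆ Y_d for some d ∈ {1,…,c}. -/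
/-!
Hypergraph Ramsey, by induction on the size `k + 1` of the coloured sets: in a linearly ordered
ground set, repeatedly split off the minimum `v` and apply Ramsey for `k`-sets to the colouring
`w ↦ f (insert v w)`; this yields a large set on which the colour of a `(k + 1)`-set depends only
on its minimum, and pigeonholing the minima finishes.

Product Ramsey, by induction on the number of coordinates: shrink the first `n` sets to size
`R₀`, then colour each `j`-subset `A` of the last set by the whole colouring `t ↦ χ (t, A)` of
the first `n` coordinates. There are boundedly many such colours, so Ramsey makes this
colouring independent of `A`, and the induction hypothesis applies to it.
-/

open Finset

universe u v

def IsRamseyBound (k C m N : ℕ) : Prop :=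
  ∀ {α : Type u} {γ : Type v} [Fintype γ], Fintype.card γ ≤ C →
    ∀ (s : Finset α) (f : Finset α → γ), N ≤ #s →
      ∃ t ⊆ s, #t = m ∧ ∃ d, ∀ w ⊆ t, #w = k → f w = d

section LinearOrder

variable {α : Type*} [LinearOrder α] {γ : Type*}

def IsMinHomogeneous (f : Finset α → γ) (k : ℕ) (t : Finset α) (col : α → γ) : Prop :=
  ∀ w ⊆ t, ∀ hw : w.Nonempty, #w = k + 1 → f w = col (w.min' hw)

variable {f : Finset α → γ} {k : ℕ} {t : Finset α} {col : α → γ}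

theorem IsMinHomogeneous.insert {v : α} {d : γ} (h : IsMinHomogeneous f k t col)
    (hv : ∀ x ∈ t, v < x) (hd : ∀ w ⊆ t, #w = k → f (insert v w) = d) :
    IsMinHomogeneous f k (insert v t) (Function.update col v d) := by
  intro w hw hne hcard
  by_cases hvw : v ∈ w
  · have hmin : w.min' hne = v :=
      le_antisymm (min'_le _ _ hvw) <| le_min' _ _ _ fun y hy =>
        (Finset.mem_insert.1 (hw hy)).elim (·.ge) fun hy => (hv y hy).le
    have hwt : w.erase v ⊆ t := fun x hx =>
      (Finset.mem_insert.1 (hw (mem_of_mem_erase hx))).resolve_left (ne_of_mem_erase hx)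
    rw [hmin, Function.update_self, ← hd _ hwt (by rw [card_erase_of_mem hvw, hcard]; rfl),
      insert_erase hvw]
  · have hwt : w ⊆ t := fun x hx =>
      (Finset.mem_insert.1 (hw hx)).resolve_left fun h => hvw (h ▸ hx)
    rw [Function.update_of_ne (ne_of_mem_of_not_mem (w.min'_mem hne) hvw), h w hwt hne hcard]

theorem IsMinHomogeneous.exists_monochromatic [Fintype γ] (h : IsMinHomogeneous f k t col)
    {m : ℕ} (ht : Fintype.card γ * m ≤ #t) :
    ∃ T ⊆ t, #T = m ∧ ∃ d, ∀ w ⊆ T, #w = k + 1 → f w = d := by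
  classical
  obtain ⟨d, -, hd⟩ := exists_le_card_fiber_of_mul_le_card_of_maps_to
    (fun a _ => mem_univ (col a)) ⟨f ∅, mem_univ _⟩ (by rwa [card_univ])
  obtain ⟨T, hTt, hTm⟩ := exists_subset_card_eq hd
  refine ⟨T, hTt.trans (filter_subset _ _), hTm, d, fun w hw hwk => ?_⟩
  have hne : w.Nonempty := card_pos.1 (hwk ▸ k.succ_pos)
  rw [h w (hw.trans (hTt.trans (filter_subset _ _))) hne hwk]
  exact (mem_filter.1 (hTt (hw (w.min'_mem hne)))).2

end LinearOrder

theorem exists_isMinHomogeneous {k C : ℕ} (ih : ∀ m, ∃ N, IsRamseyBound.{u, v} k C m N)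
    (L : ℕ) :
    ∃ N, ∀ {α : Type u} [LinearOrder α] {γ : Type v} [Fintype γ], Fintype.card γ ≤ C →
      ∀ (s : Finset α) (f : Finset α → γ), N ≤ #s →
        ∃ t ⊆ s, #t = L ∧ ∃ col, IsMinHomogeneous f k t col := by
  induction L with
  | zero =>
    exact ⟨0, fun _ s f _ => ⟨∅, empty_subset _, rfl, fun _ => f ∅,
      fun w hw hne => absurd (Finset.subset_empty.1 hw ▸ hne) Finset.not_nonempty_empty⟩⟩
  | succ L ihL =>
    obtain ⟨N, hN⟩ := ihL
    obtain ⟨M, hM⟩ := ih N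
    refine ⟨M + 1, fun hC s f hs => ?_⟩
    have hsne : s.Nonempty := card_pos.1 (by omega)
    set v := s.min' hsne
    obtain ⟨A, hAs, hAN, d, hd⟩ := hM hC (s.erase v) (fun w => f (insert v w))
      (by rw [card_erase_of_mem (s.min'_mem hsne)]; omega)
    obtain ⟨t, htA, htL, col, hcol⟩ := hN hC A f hAN.ge
    have hvt : ∀ x ∈ t, v < x := fun x hx =>
      have hx' := Finset.mem_erase.1 (hAs (htA hx))
      lt_of_le_of_ne (s.min'_le x hx'.2) (Ne.symm hx'.1)
    refine ⟨insert v t, insert_subset (s.min'_mem hsne) (htA.trans (hAs.trans (erase_subset _ _))),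
      ?_, _, hcol.insert hvt fun w hw => hd w (hw.trans htA)⟩
    rw [card_insert_of_notMem fun h => (hvt v h).false, htL]

theorem exists_isRamseyBound (k C m : ℕ) : ∃ N, IsRamseyBound.{u, v} k C m N := by
  induction k generalizing m with
  | zero =>
    refine ⟨m, fun _ s f hs => ?_⟩
    obtain ⟨t, hts, htm⟩ := exists_subset_card_eq hs
    exact ⟨t, hts, htm, f ∅, fun w _ hw => by rw [card_eq_zero.1 hw]⟩
  | succ k ih =>
    obtain ⟨N, hN⟩ := exists_isMinHomogeneous ih (C * m)
    refine ⟨N, fun {α _ _} hC s f hs => ?_⟩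
    let : LinearOrder α := IsWellOrder.linearOrder WellOrderingRel
    obtain ⟨t, hts, htCm, col, hcol⟩ := hN hC s f hs
    obtain ⟨T, hTt, hTm, hT⟩ := hcol.exists_monochromatic (htCm ▸ Nat.mul_le_mul_right m hC)
    exact ⟨T, hTt.trans hts, hTm, hT⟩

theorem exists_monochromatic_prod (γ : Type v) [Fintype γ] (r : ℕ) {n : ℕ} (j : Fin n → ℕ) :
    ∃ R, ∀ {β : Type u} (S : Fin n → Finset β) (χ : (Fin n → Finset β) → γ),
      (∀ i, R ≤ #(S i)) →
      ∃ T : Fin n → Finset β, (∀ i, T i ⊆ S i ∧ #(T i) = r) ∧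
        ∃ d, ∀ t : Fin n → Finset β, (∀ i, t i ⊆ T i ∧ #(t i) = j i) → χ t = d := by
  classical
  induction n with
  | zero =>
    exact ⟨0, fun S χ _ =>
      ⟨S, fun i => i.elim0, χ S, fun t _ => congrArg χ (Subsingleton.elim t S)⟩⟩
  | succ n ih =>
    obtain ⟨R₀, hR₀⟩ := ih (fun i => j i.castSucc)
    obtain ⟨N, hN⟩ := exists_isRamseyBound.{u, max u v} (j (Fin.last n))
      (Fintype.card γ ^ (2 ^ R₀) ^ n) r
    refine ⟨max R₀ N, fun {β} S χ hS => ?_⟩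
    choose S' hS'S hS'R₀ using fun i : Fin n =>
      exists_subset_card_eq ((le_max_left _ _).trans (hS i.castSucc))
    let F : Finset β → ((i : Fin n) → (S' i).powerset) → γ :=
      fun A p => χ (Fin.snoc (fun i => (p i).1) A)
    have hcard : Fintype.card (((i : Fin n) → (S' i).powerset) → γ) ≤
        Fintype.card γ ^ (2 ^ R₀) ^ n := by
      simp [hS'R₀]
    obtain ⟨Tl, hTlS, hTlr, g, hg⟩ :=
      hN hcard (S (Fin.last n)) F ((le_max_right _ _).trans (hS _))
    -- intersecting with `S' i` extends `g` to a colouring of all of `Fin n → Finset β`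
    obtain ⟨T', hT', d, hd⟩ := hR₀ S'
      (fun t => g fun i => ⟨t i ∩ S' i, mem_powerset.2 inter_subset_right⟩)
      (fun i => (hS'R₀ i).ge)
    refine ⟨Fin.snoc T' Tl, Fin.forall_fin_succ'.2 ⟨fun i => ?_, ?_⟩, d, fun t ht => ?_⟩
    · simpa using ⟨(hT' i).1.trans (hS'S i), (hT' i).2⟩
    · simpa using ⟨hTlS, hTlr⟩
    · simp only [Fin.forall_fin_succ', Fin.snoc_castSucc, Fin.snoc_last] at ht
      obtain ⟨hinit, hlast⟩ := ht
      rw [← hd (Fin.init t) hinit, ← hg _ hlast.1 hlast.2]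
      conv_lhs => rw [← Fin.snoc_init_self t]
      congr; funext i
      exact (Finset.inter_eq_left.2 ((hinit i).1.trans (hT' i).1)).symm

theorem statement7_general (n : ℕ) (j : Fin n → ℕ) (c r : ℕ) (hc : c ≠ 0) :
    ∃ R : ℕ, ∀ (β : Type*) (S : Fin n → Set β), (∀ i, (S i).Finite) →
      (∀ i, R ≤ (S i).ncard) →
      ∀ Y : Fin c → Set (Fin n → Set β),
        {t : Fin n → Set β | ∀ i, t i ⊆ S i ∧ (t i).Finite ∧ (t i).ncard = j i} =
          ⋃ d, Y d →
        ∃ T : Fin n → Set β,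
          (∀ i, T i ⊆ S i ∧ (T i).Finite ∧ (T i).ncard = r) ∧
          ∃ d : Fin c,
            {t : Fin n → Set β | ∀ i, t i ⊆ T i ∧ (t i).Finite ∧ (t i).ncard = j i}
              ⊆ Y d := by
  obtain ⟨R, hR⟩ := exists_monochromatic_prod (Fin c) r j
  refine ⟨R, fun β S hS hSR Y hY => ?_⟩
  obtain ⟨S', rfl⟩ : ∃ S' : Fin n → Finset β, (fun i => (S' i : Set β)) = S :=
    ⟨_, funext fun i => (hS i).coe_toFinset⟩
  have : NeZero c := ⟨hc⟩
  let χ (t : Fin n → Finset β) : Fin c :=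
    Classical.epsilon fun d => (fun i => (t i : Set β)) ∈ Y d
  obtain ⟨T, hT, d, hd⟩ := hR S' χ fun i => by simpa using hSR i
  refine ⟨fun i => T i, fun i => by simpa using hT i, d, fun t ht => ?_⟩
  obtain ⟨t', rfl⟩ : ∃ t' : Fin n → Finset β, (fun i => (t' i : Set β)) = t :=
    ⟨_, funext fun i => (ht i).2.1.coe_toFinset⟩
  simp only [Set.mem_ofPred_eq, Finset.coe_subset, Set.ncard_coe_finset, Finset.finite_toSet,
    true_and] at ht
  have hcover : (fun i => (t' i : Set β)) ∈ ⋃ d, Y d :=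
    hY ▸ fun i => ⟨Finset.coe_subset.2 ((ht i).1.trans (hT i).1), by simpa using (ht i).2⟩
  rw [← hd t' ht]
  exact Classical.epsilon_spec (Set.mem_iUnion.1 hcover)

/-- Product Ramsey theorem: for every `n ≥ 1` and natural numbers `j₁,…,jₙ, c, r`
with `c ≠ 0`, there is `R` such that whenever `S₁,…,Sₙ` are finite sets with
`|Sᵢ| ≥ R` and `[S₁]^{j₁} × ⋯ × [Sₙ]^{jₙ} = Y₁ ∪ ⋯ ∪ Y_c`, there are
`Tᵢ ∈ [Sᵢ]^r` with `[T₁]^{j₁} × ⋯ × [Tₙ]^{jₙ} ⊆ Y_d` for some `d`. -/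
theorem statement7 (n : ℕ) (hn : 1 ≤ n) (j : Fin n → ℕ) (c r : ℕ) (hc : c ≠ 0) :
    ∃ R : ℕ, ∀ (β : Type*) (S : Fin n → Set β), (∀ i, (S i).Finite) →
      (∀ i, R ≤ (S i).ncard) →
      ∀ Y : Fin c → Set (Fin n → Set β),
        {t : Fin n → Set β | ∀ i, t i ⊆ S i ∧ (t i).Finite ∧ (t i).ncard = j i} =
          ⋃ d, Y d →
        ∃ T : Fin n → Set β,
          (∀ i, T i ⊆ S i ∧ (T i).Finite ∧ (T i).ncard = r) ∧
          ∃ d : Fin c,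
            {t : Fin n → Set β | ∀ i, t i ⊆ T i ∧ (t i).Finite ∧ (t i).ncard = j i}
              ⊆ Y d :=
  statement7_general n j c r hc
end

section
/- For every infinite set A and every n ≥ 1, there is a bijection between fin(A)ⁿ (the n-fold Cartesian power of the set of finite subsets of A) and 𝒪_{2ⁿ−1}(A) (the set of ordered (2ⁿ−1)-tuples of pairwise disjoint finite subsets of A). Hence fin(𝔞)ⁿ = 𝒪_{2ⁿ−1}(𝔞) for every infinite cardinal 𝔞. -/
open Set

universe u

lemma mk_finiteSets (α : Type*) [Infinite α] :
    Cardinal.mk {s : Set α // s.Finite} = Cardinal.mk α := by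
  apply le_antisymm
  · calc Cardinal.mk {s : Set α // s.Finite} ≤ Cardinal.mk (Finset α) := by
          refine Cardinal.mk_le_of_injective (f := fun s => s.2.toFinset) ?_
          rintro ⟨s, hs⟩ ⟨t, ht⟩ h
          simpa using Set.Finite.toFinset_inj.mp h
    _ = Cardinal.mk α := Cardinal.mk_finset_of_infinite α
  · refine Cardinal.mk_le_of_injective (f := fun a => ⟨{a}, Set.finite_singleton a⟩) ?_
    intro a b h
    simpa using congrArg Subtype.val h

lemma mk_pi_eq {α : Type u} [Infinite α] (X : Type u) (m : ℕ) (hm : 1 ≤ m)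
    (hX : Cardinal.mk X = Cardinal.mk α) :
    Cardinal.mk (Fin m → X) = Cardinal.mk α := by
  have : Cardinal.mk (Fin m → X) = Cardinal.mk X ^ (m : ℕ) := by
    simp [Cardinal.mk_arrow, Cardinal.power_natCast]
  rw [this, hX, Cardinal.power_nat_eq (Cardinal.aleph0_le_mk α) hm]

lemma mk_OTuple (α : Type*) [Infinite α] (m : ℕ) (hm : 1 ≤ m) :
    Cardinal.mk ↥(OTuple α m) = Cardinal.mk α := by
  apply le_antisymm
  · calc Cardinal.mk ↥(OTuple α m)
        ≤ Cardinal.mk (Fin m → {s : Set α // s.Finite}) := by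
          refine Cardinal.mk_le_of_injective
            (f := fun p => fun i => (⟨p.1 i, p.2.1 i⟩ : {s : Set α // s.Finite})) ?_
          rintro ⟨p, hp⟩ ⟨q, hq⟩ h
          ext i x
          have := congrArg (fun f => (f i : Set α)) h
          simp only [Subtype.mk.injEq] at this ⊢
          rw [show p i = q i from congrArg Subtype.val (congrFun h i)]
    _ = Cardinal.mk α := mk_pi_eq _ m hm (mk_finiteSets α)
  · refine Cardinal.mk_le_of_injective
      (f := fun a => ⟨fun i => if i = ⟨0, hm⟩ then {a} else ∅, ?_, ?_⟩) ?_
    · intro i; dsimp only; split <;> simp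
    · intro i j hij
      by_cases hi : i = ⟨0, hm⟩
      · have hj : ¬ j = ⟨0, hm⟩ := by rintro rfl; exact hij hi
        simp [hi, hj]
      · simp [hi]
    · intro a b h
      have := congrArg (fun p => (p.1 ⟨0, hm⟩ : Set α)) h
      simpa using this

/-- For every infinite set `A` and every `n ≥ 1`, there is a bijection between
`fin(A)ⁿ` and `𝒪_{2ⁿ−1}(A)`; hence `fin(𝔞)ⁿ = 𝒪_{2ⁿ−1}(𝔞)`. -/
theorem statement8 {α : Type*} [Infinite α] (n : ℕ) (hn : 1 ≤ n) :
    (∃ f : (Fin n → {s : Set α // s.Finite}) → ↥(OTuple α (2 ^ n - 1)),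
        Function.Bijective f) ∧
      Cardinal.mk (Fin n → {s : Set α // s.Finite}) =
        Cardinal.mk ↥(OTuple α (2 ^ n - 1)) := by
  have hm : 1 ≤ 2 ^ n - 1 := by
    have : 2 ≤ 2 ^ n := by
      calc 2 = 2 ^ 1 := (pow_one 2).symm
      _ ≤ 2 ^ n := Nat.pow_le_pow_right (by norm_num) hn
    omega
  have hcard : Cardinal.mk (Fin n → {s : Set α // s.Finite}) =
      Cardinal.mk ↥(OTuple α (2 ^ n - 1)) := by
    rw [mk_pi_eq _ n hn (mk_finiteSets α), mk_OTuple α _ hm]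
  obtain ⟨e⟩ := Cardinal.eq.mp hcard
  exact ⟨⟨e, e.bijective⟩, hcard⟩
end

section
/- For every infinite set A and every n ≥ 1, there is a surjection from a subset of [fin(A)]ⁿ (the set of n-element sets of finite subsets of A) onto ℬ_{2ⁿ−1}(A); that is, ℬ_{2ⁿ−1}(𝔞) ≤* [fin(𝔞)]ⁿ for every infinite cardinal 𝔞. -/
open Set

namespace St9

variable {α : Type*}

/-- Boolean atom of the family `S` determined by the subfamily `U`. -/
def atom (S U : Set (Set α)) : Set α := ⋂₀ U \ ⋃₀ (S \ U)

lemma mem_atom_iff {S U : Set (Set α)} {a : α} :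
    a ∈ atom S U ↔ (∀ F ∈ U, a ∈ F) ∧ ∀ F ∈ S, F ∉ U → a ∉ F := by
  simp only [atom, mem_diff, mem_sInter, mem_sUnion, not_exists]
  constructor
  · rintro ⟨h1, h2⟩
    exact ⟨h1, fun F hF hFU haF => h2 F ⟨⟨hF, hFU⟩, haF⟩⟩
  · rintro ⟨h1, h2⟩
    exact ⟨h1, fun F h => h2 F h.1.1 h.1.2 h.2⟩

lemma atom_subset {S U : Set (Set α)} {F : Set α} (hF : F ∈ U) : atom S U ⊆ F :=
  fun _ ha => (mem_atom_iff.mp ha).1 F hF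

lemma atom_disjoint {S U V : Set (Set α)} (hU : U ⊆ S) (hV : V ⊆ S) (hne : U ≠ V) :
    Disjoint (atom S U) (atom S V) := by
  have key : ∀ U V : Set (Set α), U ⊆ S → (∃ F ∈ U, F ∉ V) →
      Disjoint (atom S U) (atom S V) := by
    rintro U V hU ⟨F, hFU, hFV⟩
    rw [Set.disjoint_left]
    intro a haU haV
    exact (mem_atom_iff.mp haV).2 F (hU hFU) hFV ((mem_atom_iff.mp haU).1 F hFU)
  by_cases h : U ⊆ V
  · obtain ⟨F, hFV, hFU⟩ := not_subset.mp (fun h' => hne (h.antisymm h'))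
    exact (key V U hV ⟨F, hFV, hFU⟩).symm
  · exact key U V hU (not_subset.mp h)

end St9

namespace St9

variable {α : Type*}

/-- The partition decoded from a family `S` of sets: the nonempty Boolean atoms of
`S` together with singletons outside `⋃₀ S`. -/
def decode (S : Set (Set α)) : Set (Set α) :=
  {p | ∃ U, U ⊆ S ∧ U.Nonempty ∧ p = atom S U} ∪ {p | ∃ a, a ∉ ⋃₀ S ∧ p = {a}}

/-- A good family: all members finite, and all atoms nontrivial. -/
def Good (S : Set (Set α)) : Prop :=
  (∀ s ∈ S, s.Finite) ∧ ∀ U, U ⊆ S → U.Nonempty → (atom S U).Nontrivial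

lemma decode_partition {S : Set (Set α)} (hS : Good S) :
    IsFinitaryPartition (decode S) := by
  obtain ⟨hfin, hnt⟩ := hS
  refine ⟨?_, ?_, ?_, ?_⟩
  · rintro p (⟨U, hUS, ⟨F, hF⟩, rfl⟩ | ⟨a, _, rfl⟩)
    · exact (hfin F (hUS hF)).subset (atom_subset hF)
    · exact finite_singleton a
  · rintro p (⟨U, hUS, hUne, rfl⟩ | ⟨a, _, rfl⟩)
    · exact (hnt U hUS hUne).nonempty
    · exact singleton_nonempty a
  · rintro p hp q hq hpq
    rcases hp with ⟨U, hUS, hUne, rfl⟩ | ⟨a, ha, rfl⟩ <;>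
      rcases hq with ⟨V, hVS, hVne, rfl⟩ | ⟨b, hb, rfl⟩
    · exact atom_disjoint hUS hVS (fun h => hpq (by rw [h]))
    · obtain ⟨F, hF⟩ := hUne
      rw [Set.disjoint_right]
      rintro x hx
      rw [mem_singleton_iff] at hx
      subst hx
      exact fun hxA => hb ⟨F, hUS hF, atom_subset hF hxA⟩
    · obtain ⟨F, hF⟩ := hVne
      rw [Set.disjoint_left]
      rintro x hx
      rw [mem_singleton_iff] at hx
      subst hx
      exact fun hxA => ha ⟨F, hVS hF, atom_subset hF hxA⟩
    · simp only [disjoint_singleton]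
      exact fun h => hpq (by rw [h])
  · ext a
    simp only [mem_univ, iff_true, mem_sUnion]
    by_cases ha : a ∈ ⋃₀ S
    · refine ⟨atom S {F ∈ S | a ∈ F}, Or.inl ⟨_, sep_subset _ _, ?_, rfl⟩, ?_⟩
      · obtain ⟨F, hFS, haF⟩ := ha
        exact ⟨F, hFS, haF⟩
      · rw [mem_atom_iff]
        exact ⟨fun F hF => hF.2, fun F hFS hF haF => hF ⟨hFS, haF⟩⟩
    · exact ⟨{a}, Or.inr ⟨a, ha, rfl⟩, rfl⟩

lemma nsBlocks_decode {S : Set (Set α)} (hS : Good S) :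
    nsBlocks (decode S) = {p | ∃ U, U ⊆ S ∧ U.Nonempty ∧ p = atom S U} := by
  ext p
  simp only [nsBlocks, mem_setOf_eq, mem_sep_iff, decode, mem_union]
  constructor
  · rintro ⟨⟨U, hUS, hUne, rfl⟩ | ⟨a, _, rfl⟩, hnt⟩
    · exact ⟨U, hUS, hUne, rfl⟩
    · exact absurd hnt (not_nontrivial_singleton)
  · rintro ⟨U, hUS, hUne, rfl⟩
    exact ⟨Or.inl ⟨U, hUS, hUne, rfl⟩, hS.2 U hUS hUne⟩

end St9

namespace St9

variable {α : Type*}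

lemma ncard_nsBlocks_decode {S : Set (Set α)} {n : ℕ} (hS : Good S)
    (hfin : S.Finite) (hcard : S.ncard = n) :
    (nsBlocks (decode S)).Finite ∧ (nsBlocks (decode S)).ncard = 2 ^ n - 1 := by
  classical
  set s : Finset (Set α) := hfin.toFinset with hs
  have hsS : (s : Set (Set α)) = S := hfin.coe_toFinset
  have hscard : s.card = n := by
    rw [← hcard, ← hsS, Set.ncard_coe_finset]
  set t : Finset (Finset (Set α)) := s.powerset.erase ∅ with ht
  have hmem : ∀ I : Finset (Set α), I ∈ t ↔ ((I : Set (Set α)) ⊆ S ∧ (I : Set (Set α)).Nonempty) := by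
    intro I
    rw [ht, Finset.mem_erase, Finset.mem_powerset]
    constructor
    · rintro ⟨h1, h2⟩
      refine ⟨?_, Finset.coe_nonempty.mpr (Finset.nonempty_iff_ne_empty.mpr h1)⟩
      intro x hx
      exact hsS ▸ (h2 hx : x ∈ (s : Set (Set α)))
    · rintro ⟨h1, h2⟩
      refine ⟨Finset.nonempty_iff_ne_empty.mp (Finset.coe_nonempty.mp h2), ?_⟩
      intro x hx
      have : x ∈ (s : Set (Set α)) := hsS ▸ h1 hx
      exact this
  set u : Finset (Set α) := t.image (fun I : Finset (Set α) => atom S (↑I : Set (Set α))) with hu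
  have key : nsBlocks (decode S) = ↑u := by
    rw [nsBlocks_decode hS]
    ext p
    rw [Finset.mem_coe, hu, Finset.mem_image]
    constructor
    · rintro ⟨U, hUS, hUne, rfl⟩
      have hUfin : U.Finite := hfin.subset hUS
      refine ⟨hUfin.toFinset, (hmem _).mpr ?_, by rw [hUfin.coe_toFinset]⟩
      rw [hUfin.coe_toFinset]
      exact ⟨hUS, hUne⟩
    · rintro ⟨I, hI, rfl⟩
      obtain ⟨h1, h2⟩ := (hmem I).mp hI
      exact ⟨↑I, h1, h2, rfl⟩
  have hinj : Set.InjOn (fun I : Finset (Set α) => atom S (I : Set (Set α)))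
      (t : Set (Finset (Set α))) := by
    intro I hI J hJ hIJ
    rw [Finset.mem_coe] at hI hJ
    by_contra hne
    have hne' : (I : Set (Set α)) ≠ ↑J := fun h => hne (Finset.coe_injective h)
    obtain ⟨hI1, hI2⟩ := (hmem I).mp hI
    obtain ⟨hJ1, _⟩ := (hmem J).mp hJ
    have hdisj := atom_disjoint (S := S) hI1 hJ1 hne'
    have hne2 : (atom S ↑I).Nonempty := (hS.2 ↑I hI1 hI2).nonempty
    simp only at hIJ
    rw [hIJ] at hdisj
    rw [hIJ] at hne2
    exact hne2.ne_empty (disjoint_self.mp hdisj)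
  have htcard : t.card = 2 ^ n - 1 := by
    rw [ht, Finset.card_erase_of_mem (Finset.empty_mem_powerset s),
      Finset.card_powerset, hscard]
  have hucard : u.card = 2 ^ n - 1 := by
    rw [hu, Finset.card_image_of_injOn hinj, htcard]
  constructor
  · rw [key]; exact u.finite_toSet
  · rw [key, Set.ncard_coe_finset, hucard]

end St9

namespace St9

variable {α : Type*}

lemma exists_encode {n : ℕ} (hn : 1 ≤ n) {P : Set (Set α)}
    (hP : P ∈ BPart α (2 ^ n - 1)) :
    ∃ F : Fin n → Set α, Function.Injective F ∧ (∀ i, (F i).Finite) ∧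
      Good (Set.range F) ∧ decode (Set.range F) = P := by
  classical
  obtain ⟨⟨hPfin, hPne, hPdisj, hPcov⟩, hNfin, hNcard⟩ := hP
  set N := nsBlocks P with hN
  have hNP : N ⊆ P := fun p hp => hp.1
  have hNnt : ∀ p ∈ N, p.Nontrivial := fun p hp => hp.2
  haveI : Fintype ↥N := hNfin.fintype
  have hNcard' : Fintype.card ↥N = 2 ^ n - 1 := by
    rw [← Nat.card_eq_fintype_card, Nat.card_coe_set_eq, hNcard]
  have hIcard : Fintype.card {T : Finset (Fin n) // T.Nonempty} = 2 ^ n - 1 := by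
    have e : {T : Finset (Fin n) // T.Nonempty} ≃ {T : Finset (Fin n) // ¬ T = ∅} :=
      Equiv.subtypeEquivRight (fun T => Finset.nonempty_iff_ne_empty)
    rw [Fintype.card_congr e, Fintype.card_subtype_compl, Fintype.card_subtype_eq,
      Fintype.card_finset, Fintype.card_fin]
  obtain ⟨g⟩ : Nonempty ({T : Finset (Fin n) // T.Nonempty} ≃ ↥N) :=
    ⟨Fintype.equivOfCardEq (by rw [hIcard, hNcard'])⟩
  -- blocks are pairwise disjoint, hence an element determines its block
  have huniq : ∀ (T T' : {T : Finset (Fin n) // T.Nonempty}) (x : α),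
      x ∈ (g T : Set α) → x ∈ (g T' : Set α) → T = T' := by
    intro T T' x hx hx'
    by_contra hne
    have hgne : (g T : Set α) ≠ (g T' : Set α) := by
      intro h
      exact hne (g.injective (Subtype.ext h))
    exact Set.disjoint_left.mp
      (hPdisj _ (hNP (g T).2) _ (hNP (g T').2) hgne) hx hx'
  set F : Fin n → Set α := fun i =>
    ⋃ (T : {T : Finset (Fin n) // T.Nonempty}) (_ : i ∈ T.1), (g T : Set α) with hF
  have hFmem : ∀ i x, x ∈ F i ↔ ∃ T : {T : Finset (Fin n) // T.Nonempty},
      i ∈ T.1 ∧ x ∈ (g T : Set α) := by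
    intro i x
    simp only [hF, mem_iUnion, exists_prop]
  have hFfin : ∀ i, (F i).Finite := by
    intro i
    apply Set.Finite.biUnion (Set.toFinite _)
    intro T _
    exact hPfin _ (hNP (g T).2)
  have hgsub : ∀ (T : {T : Finset (Fin n) // T.Nonempty}), ∀ i ∈ T.1,
      (g T : Set α) ⊆ F i := by
    intro T i hi x hx
    exact (hFmem i x).mpr ⟨T, hi, hx⟩
  have hFinj : Function.Injective F := by
    intro i j hij
    by_contra hne
    set T0 : {T : Finset (Fin n) // T.Nonempty} := ⟨{i}, Finset.singleton_nonempty i⟩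
    obtain ⟨x, hx⟩ := hPne _ (hNP (g T0).2)
    have hxi : x ∈ F i := hgsub T0 i (Finset.mem_singleton_self i) hx
    rw [hij] at hxi
    obtain ⟨T, hjT, hxT⟩ := (hFmem j x).mp hxi
    have : T = T0 := huniq T T0 x hxT hx
    rw [this] at hjT
    exact hne (Finset.mem_singleton.mp hjT).symm
  set Sv : Set (Set α) := Set.range F with hSv
  -- the key atom computation
  have hatom : ∀ (U : Set (Set α)), U ⊆ Sv → ∀ (J : Finset (Fin n)) (hJ : J.Nonempty),
      (∀ i, i ∈ J ↔ F i ∈ U) → atom Sv U = (g ⟨J, hJ⟩ : Set α) := by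
    intro U hUS J hJ hJU
    ext x
    rw [mem_atom_iff]
    constructor
    · rintro ⟨h1, h2⟩
      obtain ⟨i, hi⟩ := id hJ
      have hxi : x ∈ F i := h1 _ ((hJU i).mp hi)
      obtain ⟨T, hiT, hxT⟩ := (hFmem i x).mp hxi
      have hTJ : T = ⟨J, hJ⟩ := by
        apply Subtype.ext
        ext j
        constructor
        · intro hjT
          by_contra hjJ
          have hFjU : F j ∉ U := fun h => hjJ ((hJU j).mpr h)
          exact h2 (F j) ⟨j, rfl⟩ hFjU (hgsub T j hjT hxT)
        · intro hjJ
          obtain ⟨T', hjT', hxT'⟩ := (hFmem j x).mp (h1 _ ((hJU j).mp hjJ))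
          rw [huniq T T' x hxT hxT']
          exact hjT'
      rwa [← hTJ]
    · intro hx
      constructor
      · rintro p hpU
        obtain ⟨i, rfl⟩ := hUS hpU
        exact hgsub ⟨J, hJ⟩ i ((hJU i).mpr hpU) hx
      · rintro p ⟨j, rfl⟩ hpU hxp
        obtain ⟨T, hjT, hxT⟩ := (hFmem j x).mp hxp
        have : T = ⟨J, hJ⟩ := huniq T ⟨J, hJ⟩ x hxT hx
        subst this
        exact hpU ((hJU j).mp hjT)
  -- every nonempty subfamily has an index finset
  have hindex : ∀ (U : Set (Set α)), U ⊆ Sv → U.Nonempty →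
      ∃ (J : Finset (Fin n)) (hJ : J.Nonempty), (∀ i, i ∈ J ↔ F i ∈ U) := by
    intro U hUS hUne
    refine ⟨Finset.univ.filter (fun i => F i ∈ U), ?_, ?_⟩
    · obtain ⟨p, hp⟩ := hUne
      obtain ⟨i, rfl⟩ := hUS hp
      exact ⟨i, Finset.mem_filter.mpr ⟨Finset.mem_univ i, hp⟩⟩
    · intro i
      simp [Finset.mem_filter]
  have hGood : Good Sv := by
    constructor
    · rintro p ⟨i, rfl⟩; exact hFfin i
    · intro U hUS hUne
      obtain ⟨J, hJ, hJU⟩ := hindex U hUS hUne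
      rw [hatom U hUS J hJ hJU]
      exact hNnt _ (g ⟨J, hJ⟩).2
  -- the set of atoms is exactly N
  have hatomset : {p : Set α | ∃ U, U ⊆ Sv ∧ U.Nonempty ∧ p = atom Sv U} = N := by
    ext p
    constructor
    · rintro ⟨U, hUS, hUne, rfl⟩
      obtain ⟨J, hJ, hJU⟩ := hindex U hUS hUne
      rw [hatom U hUS J hJ hJU]
      exact (g ⟨J, hJ⟩).2
    · intro hp
      set T := g.symm ⟨p, hp⟩ with hT
      have hpT : (g T : Set α) = p := by rw [hT, Equiv.apply_symm_apply]
      refine ⟨F '' ↑T.1, image_subset_range _ _, (T.2.to_set).image F, ?_⟩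
      have hJU : ∀ i, i ∈ T.1 ↔ F i ∈ F '' ↑T.1 := by
        intro i
        constructor
        · intro hi; exact ⟨i, hi, rfl⟩
        · rintro ⟨i', hi', he⟩
          rwa [← hFinj he]
      rw [hatom (F '' ↑T.1) (image_subset_range _ _) T.1 T.2 hJU, hpT]
  -- the union of the family is the union of the non-singleton blocks
  have hsU : ⋃₀ Sv = ⋃₀ N := by
    ext x
    constructor
    · rintro ⟨p, ⟨i, rfl⟩, hx⟩
      obtain ⟨T, _, hxT⟩ := (hFmem i x).mp hx
      exact ⟨↑(g T), (g T).2, hxT⟩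
    · rintro ⟨p, hp, hx⟩
      have hpT : (g (g.symm ⟨p, hp⟩) : Set α) = p := by rw [Equiv.apply_symm_apply]
      obtain ⟨i, hi⟩ := (g.symm ⟨p, hp⟩).2
      exact ⟨F i, ⟨i, rfl⟩, hgsub _ i hi (by rw [hpT]; exact hx)⟩
  -- decode recovers P
  have hdec : decode Sv = P := by
    rw [decode, hatomset, hsU]
    ext p
    constructor
    · rintro (hp | ⟨a, ha, rfl⟩)
      · exact hNP hp
      · -- {a} with a outside all non-singleton blocks is a block of P
        have : a ∈ ⋃₀ P := by rw [hPcov]; trivial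
        obtain ⟨q, hq, haq⟩ := this
        have hqs : ¬ q.Nontrivial := fun h => ha ⟨q, ⟨hq, h⟩, haq⟩
        rcases (not_nontrivial_iff.mp hqs).eq_empty_or_singleton with h | ⟨b, h⟩
        · exact absurd (h ▸ haq) (notMem_empty a)
        · have : q = {a} := by
            rw [h] at haq ⊢
            rw [mem_singleton_iff.mp haq]
          rwa [← this]
    · intro hp
      by_cases hnt : p.Nontrivial
      · exact Or.inl ⟨hp, hnt⟩
      · rcases (not_nontrivial_iff.mp hnt).eq_empty_or_singleton with h | ⟨a, h⟩
        · exact absurd (h ▸ hPne p hp) (Set.not_nonempty_empty)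
        · subst h
          refine Or.inr ⟨a, ?_, rfl⟩
          rintro ⟨q, hqN, haq⟩
          have hne : ({a} : Set α) ≠ q := by
            rintro rfl
            exact hnt (hNnt _ hqN)
          exact Set.disjoint_left.mp (hPdisj _ hp _ (hNP hqN) hne) rfl haq
  exact ⟨F, hFinj, hFfin, hGood, hdec⟩

end St9


/-- For every infinite set `A` and every `n ≥ 1`, there is a surjection from a
subset of `[fin(A)]ⁿ` onto `ℬ_{2ⁿ−1}(A)`; i.e. `ℬ_{2ⁿ−1}(𝔞) ≤* [fin(𝔞)]ⁿ`. -/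
theorem statement9 {α : Type*} [Infinite α] (n : ℕ) (hn : 1 ≤ n) :
    ∃ (D : Set ↥{S : Set {s : Set α // s.Finite} | S.Finite ∧ S.ncard = n})
      (f : ↥D → ↥(BPart α (2 ^ n - 1))), Function.Surjective f := by
  classical
  set Base := {S : Set {s : Set α // s.Finite} | S.Finite ∧ S.ncard = n} with hBase
  set D : Set ↥Base :=
    {S | St9.Good (Subtype.val '' (S : Set {s : Set α // s.Finite}))} with hD
  have hmem : ∀ S : ↥D,
      St9.decode (Subtype.val '' ((S : ↥Base) : Set {s : Set α // s.Finite})) ∈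
        BPart α (2 ^ n - 1) := by
    intro S
    obtain ⟨hSfin, hScard⟩ := (S : ↥Base).2
    have hgood : St9.Good (Subtype.val '' ((S : ↥Base) : Set {s : Set α // s.Finite})) :=
      S.2
    have hfin : (Subtype.val '' ((S : ↥Base) : Set {s : Set α // s.Finite})).Finite :=
      hSfin.image _
    have hcard : (Subtype.val '' ((S : ↥Base) : Set {s : Set α // s.Finite})).ncard = n := by
      rw [Set.ncard_image_of_injective _ Subtype.val_injective]; exact hScard
    obtain ⟨h1, h2⟩ := St9.ncard_nsBlocks_decode hgood hfin hcard
    exact ⟨St9.decode_partition hgood, h1, h2⟩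
  refine ⟨D, fun S => ⟨_, hmem S⟩, ?_⟩
  rintro ⟨P, hP⟩
  obtain ⟨F, hFinj, hFfin, hGood, hdec⟩ := St9.exists_encode hn hP
  set G : Fin n → {s : Set α // s.Finite} := fun i => ⟨F i, hFfin i⟩ with hG
  have hGinj : Function.Injective G := fun i j h => hFinj (congrArg Subtype.val h)
  set S0 : Set {s : Set α // s.Finite} := Set.range G with hS0
  have hval : Subtype.val '' S0 = Set.range F := by
    rw [hS0, ← Set.range_comp]; rfl
  have hbase : S0 ∈ Base := by
    refine ⟨Set.finite_range G, ?_⟩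
    have h1 : S0.ncard = (Subtype.val '' S0).ncard :=
      (Set.ncard_image_of_injective _ Subtype.val_injective).symm
    rw [h1, hval, ← Nat.card_coe_set_eq, Nat.card_range_of_injective hFinj,
      Nat.card_eq_fintype_card, Fintype.card_fin]
  have hDmem : (⟨S0, hbase⟩ : ↥Base) ∈ D := by
    show St9.Good _
    rw [hval]
    exact hGood
  refine ⟨⟨⟨S0, hbase⟩, hDmem⟩, ?_⟩
  apply Subtype.ext
  show St9.decode (Subtype.val '' S0) = P
  rw [hval, hdec]
end

section
/- Let A be an infinite set, n ≥ 1, and let m₁,…,mₙ and l₁,…,lₙ be natural numbers with mᵢ ≤ lᵢ for all i = 1,…,n. Then the map γ is injective on the collection {X ⊆ 𝒪_{m₁,…,mₙ}(A) : α(X) = X}; that is, if X, Y ⊆ 𝒪_{m₁,…,mₙ}(A) satisfy α(X) = X, α(Y) = Y and γ(X) = γ(Y), then X = Y. -/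
open Set

/-- For `mᵢ ≤ lᵢ`, the map `γ` is injective on `{X ⊆ 𝒪_{m₁,…,mₙ}(A) : α(X) = X}`. -/
theorem statement12 {α : Type*} [Infinite α] (n : ℕ) (hn : 1 ≤ n)
    (m l : Fin n → ℕ) (hml : ∀ i, m i ≤ l i)
    (X Y : Set (Fin n → Set α)) (hX : X ⊆ OTupleCard α m) (hY : Y ⊆ OTupleCard α m)
    (haX : alphaOp m l X = X) (haY : alphaOp m l Y = Y)
    (hg : gammaOp l X = gammaOp l Y) : X = Y := by
  have key : ∀ Z W : Set (Fin n → Set α), Z ⊆ OTupleCard α m →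
      gammaOp l Z = gammaOp l W → Z ⊆ alphaOp m l W := by
    intro Z W hZ hgzw p hp
    exact ⟨hZ hp, fun q hq hpq => hgzw ▸ ⟨hq, p, hp, hpq⟩⟩
  apply subset_antisymm
  · exact haY ▸ key X Y hX hg
  · exact haX ▸ key Y X hY hg.symm
end

section
/- Let A be an infinite set, n ≥ 1, and E a finite subset of A. For each finitary partition P of A with exactly n non-singleton blocks, the number of finitary partitions Q of A with exactly n non-singleton blocks satisfying Q_E = P_E is at most (n+1)^{|E|}; that is, |{Q ∈ ℬₙ(A) : Q_E = P_E}| ≤ (n+1)^{|E|}. -/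
open Set

/-- `P_E = {p \ E : p ∈ ns(P), p \ E ≠ ∅}`. -/
def projE {α : Type*} (E : Set α) (P : Set (Set α)) : Set (Set α) :=
  {s | ∃ p ∈ nsBlocks P, s = p \ E ∧ s ≠ ∅}

/-!
Fix once and for all an injective labelling `ι` of the finite set `S = P_E` by `Fin n`. For any
`Q ∈ ℬₙ(A)` with `Q_E = S`, the labels of `S` extend to a bijection between `ns(Q)` and `Fin n`
in which a block `q` with `q \ E ≠ ∅` carries the label of `q \ E`. Recording, for each `e ∈ E`,
the label of the non-singleton block containing `e` (or `none`) gives a map `E → Option (Fin n)`.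
From it, each block is recovered as its trace on `E` together with the element of `S` bearing the
same label, if any; so `ns(Q)`, and with it `Q`, is determined by one of `(n+1)^|E|` maps.
-/

open Function

section

variable {α : Type*}

namespace IsFinitaryPartition

variable {Q Q' : Set (Set α)}

theorem eq_of_mem_of_mem (hQ : IsFinitaryPartition Q) {p q : Set α} (hp : p ∈ Q) (hq : q ∈ Q)
    {x : α} (hxp : x ∈ p) (hxq : x ∈ q) : p = q :=
  by_contra fun hne => (hQ.2.2.1 p hp q hq hne).ne_of_mem hxp hxq rfl

theorem exists_mem (hQ : IsFinitaryPartition Q) (x : α) : ∃ p ∈ Q, x ∈ p :=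
  mem_sUnion.mp (hQ.2.2.2 ▸ mem_univ x)

theorem subset_of_nsBlocks_eq (hQ : IsFinitaryPartition Q) (hQ' : IsFinitaryPartition Q')
    (h : nsBlocks Q = nsBlocks Q') : Q ⊆ Q' := by
  intro p hp
  by_cases hnt : p.Nontrivial
  · have hp' : p ∈ nsBlocks Q' := h ▸ ⟨hp, hnt⟩
    exact hp'.1
  obtain ⟨x, hx⟩ := hQ.2.1 p hp
  obtain ⟨q, hq, hxq⟩ := hQ'.exists_mem x
  have hqnt : ¬q.Nontrivial := fun hqnt => by
    have hq' : q ∈ nsBlocks Q := h ▸ ⟨hq, hqnt⟩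
    exact hnt (hQ.eq_of_mem_of_mem hp hq'.1 hx hxq ▸ hqnt)
  rwa [(not_nontrivial_iff.mp hnt).eq_singleton_of_mem hx,
    ← (not_nontrivial_iff.mp hqnt).eq_singleton_of_mem hxq]

theorem eq_of_nsBlocks_eq (hQ : IsFinitaryPartition Q) (hQ' : IsFinitaryPartition Q')
    (h : nsBlocks Q = nsBlocks Q') : Q = Q' :=
  (hQ.subset_of_nsBlocks_eq hQ' h).antisymm (hQ'.subset_of_nsBlocks_eq hQ h.symm)

end IsFinitaryPartition

theorem nonempty_of_mem_projE {E s : Set α} {P : Set (Set α)} (hs : s ∈ projE E P) :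
    s.Nonempty := by
  obtain ⟨-, -, -, hne⟩ := hs
  exact nonempty_iff_ne_empty.mpr hne

theorem projE_subset_image_nsBlocks (E : Set α) (P : Set (Set α)) :
    projE E P ⊆ (· \ E) '' nsBlocks P := by
  rintro s ⟨p, hp, rfl, -⟩
  exact ⟨p, hp, rfl⟩

theorem nonempty_projE_embedding_fin {n : ℕ} {P : Set (Set α)} (hP : P ∈ BPart α n)
    (E : Set α) : Nonempty (projE E P ↪ Fin n) := by
  obtain ⟨-, hfin, hcard⟩ := hP
  have hsub := projE_subset_image_nsBlocks E P
  have : Fintype (projE E P) := ((hfin.image _).subset hsub).fintype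
  apply Embedding.nonempty_of_card_le
  rw [Fintype.card_fin, ← Nat.card_eq_fintype_card, Nat.card_coe_set_eq, ← hcard]
  exact (ncard_le_ncard hsub (hfin.image _)).trans (ncard_image_le hfin)

theorem exists_equiv_extend_subtype {β γ : Type*} [Finite β] (e₀ : β ≃ γ) {p : β → Prop}
    (φ : Subtype p → γ) (hφ : Injective φ) : ∃ e : β ≃ γ, ∀ b : Subtype p, e b = φ b := by
  obtain ⟨σ, hσ⟩ := Equiv.Perm.exists_extending_pair (e₀ ∘ Subtype.val) φ
    (e₀.injective.comp Subtype.val_injective) hφ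
  exact ⟨e₀.trans σ, hσ⟩

theorem Pairwise.exists_index_iff_mem {ι β : Type*} {f : ι → Set β}
    (hf : Pairwise (Disjoint on f)) : ∃ c : β → Option ι, ∀ x i, c x = some i ↔ x ∈ f i := by
  classical
  refine ⟨fun x => if h : ∃ i, x ∈ f i then some h.choose else none, fun x i => ?_⟩
  dsimp only
  split_ifs with h
  · rw [Option.some_inj]
    exact ⟨fun hi => hi ▸ h.choose_spec,
      fun hx => hf.eq (not_disjoint_iff.mpr ⟨x, h.choose_spec, hx⟩)⟩
  · exact iff_of_false (by simp) fun hx => h ⟨i, hx⟩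

theorem exists_nsBlocks_equiv_fin {n : ℕ} {Q : Set (Set α)} (hQ : Q ∈ BPart α n) {E : Set α}
    (ι : projE E Q ↪ Fin n) :
    ∃ e : nsBlocks Q ≃ Fin n, ∀ (q : nsBlocks Q) (h : (q : Set α) \ E ∈ projE E Q),
      e q = ι ⟨_, h⟩ := by
  obtain ⟨hQp, hfin, hcard⟩ := hQ
  have : Finite (nsBlocks Q) := hfin
  have hι : Injective fun q : {q : nsBlocks Q // (q : Set α) \ E ∈ projE E Q} => ι ⟨_, q.2⟩ := by
    rintro ⟨⟨q₁, hq₁⟩, h₁⟩ ⟨⟨q₂, hq₂⟩, h₂⟩ h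
    have hdiff : q₁ \ E = q₂ \ E := congrArg Subtype.val (ι.injective h)
    obtain ⟨x, hx⟩ := nonempty_of_mem_projE h₁
    simp only [Subtype.mk.injEq]
    exact hQp.eq_of_mem_of_mem hq₁.1 hq₂.1 hx.1 (hdiff ▸ hx).1
  obtain ⟨e, he⟩ := exists_equiv_extend_subtype
    (Finite.equivFinOfCardEq (by rw [Nat.card_coe_set_eq, hcard])) _ hι
  exact ⟨e, fun q h => he (Subtype.mk q h)⟩

def decodeBlocks {n : ℕ} (E : Set α) {S : Set (Set α)} (ι : S → Fin n)
    (c : E → Option (Fin n)) : Set (Set α) :=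
  range fun k => {x | ∃ h : x ∈ E, c ⟨x, h⟩ = some k} ∪ ⋃ (s : S) (_ : ι s = k), (s : Set α)

theorem exists_nsBlocks_eq_decodeBlocks {n : ℕ} {E : Set α} {S : Set (Set α)} (ι : S ↪ Fin n)
    {Q : Set (Set α)} (hQ : Q ∈ BPart α n) (hS : projE E Q = S) :
    ∃ c, nsBlocks Q = decodeBlocks E ι c := by
  subst hS
  obtain ⟨e, he⟩ := exists_nsBlocks_equiv_fin hQ ι
  set f : Fin n → Set α := fun k => e.symm k
  have hdisj : Pairwise (Disjoint on f) := fun k l hkl =>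
    hQ.1.2.2.1 _ (e.symm k).2.1 _ (e.symm l).2.1 fun h => hkl (e.symm.injective (Subtype.ext h))
  obtain ⟨c, hc⟩ := hdisj.exists_index_iff_mem
  have hinter : ∀ k, f k ∩ E = {x | ∃ h : x ∈ E, c x = some k} := fun k => by
    ext x
    simp only [mem_inter_iff, mem_ofPred_eq, hc, exists_prop, and_comm]
  have hdiff : ∀ k, f k \ E = ⋃ (s : projE E Q) (_ : ι s = k), (s : Set α) := fun k => by
    ext x
    simp only [mem_iUnion, exists_prop]
    constructor
    · intro hx
      have hs : f k \ E ∈ projE E Q := ⟨f k, (e.symm k).2, rfl, Set.Nonempty.ne_empty ⟨x, hx⟩⟩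
      exact ⟨⟨_, hs⟩, (he (e.symm k) hs).symm.trans (e.apply_symm_apply k), hx⟩
    · rintro ⟨⟨s, hs⟩, hk, hx⟩
      obtain ⟨p, hp, rfl, -⟩ := id hs
      rw [← he ⟨p, hp⟩ hs, ← e.eq_symm_apply] at hk
      simpa only [f, ← hk] using hx
  refine ⟨fun x => c x, ?_⟩
  have hrange : nsBlocks Q = range f := by
    rw [← Subtype.range_coe (s := nsBlocks Q), ← e.symm.surjective.range_comp]
    rfl
  rw [hrange, decodeBlocks]
  congr 1
  funext k
  rw [← hinter, ← hdiff, inter_union_sdiff]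

end

theorem statement14_general {α : Type*} (n : ℕ)
    (E : Set α) (hE : E.Finite) (P : Set (Set α)) (hP : P ∈ BPart α n) :
    Cardinal.mk ↥{Q | Q ∈ BPart α n ∧ projE E Q = projE E P} ≤
      (((n + 1) ^ E.ncard : ℕ) : Cardinal) := by
  have : Finite E := hE
  obtain ⟨ι⟩ := nonempty_projE_embedding_fin hP E
  set T := {Q | Q ∈ BPart α n ∧ projE E Q = projE E P}
  have hinj : InjOn nsBlocks T := fun Q₁ h₁ Q₂ h₂ h => h₁.1.1.eq_of_nsBlocks_eq h₂.1.1 h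
  have hdecode : nsBlocks '' T ⊆ range (decodeBlocks E ι) := by
    rintro _ ⟨Q, ⟨hQ, hQP⟩, rfl⟩
    obtain ⟨c, hc⟩ := exists_nsBlocks_eq_decodeBlocks ι hQ hQP
    exact ⟨c, hc.symm⟩
  calc Cardinal.mk T = Cardinal.mk (nsBlocks '' T) := (Cardinal.mk_image_eq_of_injOn _ _ hinj).symm
    _ ≤ Cardinal.mk (range (decodeBlocks E ι)) := Cardinal.mk_le_mk_of_subset hdecode
    _ ≤ Cardinal.mk (E → Option (Fin n)) := Cardinal.mk_range_le
    _ = (((n + 1) ^ E.ncard : ℕ) : Cardinal) := by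
      rw [← Nat.cast_card, Nat.card_fun, Nat.card_coe_set_eq, Nat.card_eq_fintype_card,
        Fintype.card_option, Fintype.card_fin]

/-- For every infinite set `A`, `n ≥ 1`, finite `E ⊆ A` and `P ∈ ℬₙ(A)`,
`|{Q ∈ ℬₙ(A) : Q_E = P_E}| ≤ (n+1)^{|E|}`. -/
theorem statement14 {α : Type*} [Infinite α] (n : ℕ) (hn : 1 ≤ n)
    (E : Set α) (hE : E.Finite) (P : Set (Set α)) (hP : P ∈ BPart α n) :
    Cardinal.mk ↥{Q | Q ∈ BPart α n ∧ projE E Q = projE E P} ≤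
      (((n + 1) ^ E.ncard : ℕ) : Cardinal) :=
  statement14_general n E hE P hP
end

section
/- Let A be an infinite set, n ≥ 1, and E a finite subset of A. Define a preorder ⊑ on ℬₙ(A) by: Q ⊑ P if and only if every block of Q_E is a union of some blocks of P_E. Then every ⊑-chain in ℬₙ(A) without repetition has length at most (n+1)^{|E|+1}; that is, if P₀, P₁, …, P_k ∈ ℬₙ(A) are pairwise distinct and P_{i+1} ⊑ P_i for all i < k, then k + 1 ≤ (n+1)^{|E|+1}. -/
open Set

/-- `Q ⊑ P` iff every block of `Q_E` is a union of some blocks of `P_E`. -/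
def sqle {α : Type*} (E : Set α) (Q P : Set (Set α)) : Prop :=
  ∀ q ∈ projE E Q, ∃ S ⊆ projE E P, q = ⋃₀ S

noncomputable section
namespace St15

noncomputable def LO (α : Type*) : LinearOrder (Set α) :=
  IsWellOrder.linearOrder WellOrderingRel

variable {α : Type*}

def slt (s t : Set α) : Prop := (LO α).lt s t

lemma slt_trans {a b c : Set α} (h1 : slt a b) (h2 : slt b c) : slt a c :=
  @lt_trans _ (LO α).toPreorder a b c h1 h2

lemma slt_irrefl (a : Set α) : ¬ slt a a := @lt_irrefl _ (LO α).toPreorder a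

lemma slt_trich (a b : Set α) : slt a b ∨ a = b ∨ slt b a := @lt_trichotomy _ (LO α) a b

def rk (T : Set (Set α)) (s : Set α) : ℕ := {t ∈ T | slt t s}.ncard

lemma rk_lt_of_mem {T : Set (Set α)} (hT : T.Finite) {s : Set α} (hs : s ∈ T) :
    rk T s < T.ncard := by
  apply Set.ncard_lt_ncard _ hT
  constructor
  · exact fun t ht => ht.1
  · intro hsub
    exact slt_irrefl s (hsub hs).2

lemma rk_injOn {T : Set (Set α)} (hT : T.Finite) {s t : Set α} (hs : s ∈ T) (ht : t ∈ T)
    (h : rk T s = rk T t) : s = t := by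
  rcases slt_trich s t with hlt | heq | hlt
  · exfalso
    have hss : {u ∈ T | slt u s} ⊂ {u ∈ T | slt u t} := by
      constructor
      · exact fun u hu => ⟨hu.1, slt_trans hu.2 hlt⟩
      · intro hsub
        exact slt_irrefl s (hsub ⟨hs, hlt⟩).2
    have := Set.ncard_lt_ncard hss (hT.subset (Set.sep_subset _ _))
    simp only [rk] at h
    omega
  · exact heq
  · exfalso
    have hss : {u ∈ T | slt u t} ⊂ {u ∈ T | slt u s} := by
      constructor
      · exact fun u hu => ⟨hu.1, slt_trans hu.2 hlt⟩
      · intro hsub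
        exact slt_irrefl t (hsub ⟨ht, hlt⟩).2
    have := Set.ncard_lt_ncard hss (hT.subset (Set.sep_subset _ _))
    simp only [rk] at h
    omega


open Classical in
noncomputable def blockOf (P : Set (Set α)) (a : α) : Set α :=
  if h : ∃ p ∈ P, a ∈ p then h.choose else ∅

lemma blockOf_spec {P : Set (Set α)} (hP : IsFinitaryPartition P) (a : α) :
    blockOf P a ∈ P ∧ a ∈ blockOf P a := by
  have h : ∃ p ∈ P, a ∈ p := by
    have hu : a ∈ ⋃₀ P := by rw [hP.2.2.2]; trivial
    exact hu
  rw [blockOf, dif_pos h]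
  exact ⟨h.choose_spec.1, h.choose_spec.2⟩

lemma blockOf_eq {P : Set (Set α)} (hP : IsFinitaryPartition P) {a : α} {p : Set α}
    (hp : p ∈ P) (ha : a ∈ p) : blockOf P a = p := by
  obtain ⟨hb1, hb2⟩ := blockOf_spec hP a
  by_contra hne
  exact Set.disjoint_left.1 (hP.2.2.1 _ hb1 _ hp hne) hb2 ha

/-- nontrivial blocks meeting the complement of `E`. -/
def NE (E : Set α) (P : Set (Set α)) : Set (Set α) := {p ∈ nsBlocks P | p \ E ≠ ∅}

/-- nontrivial blocks inside `E`. -/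
def EB (E : Set α) (P : Set (Set α)) : Set (Set α) := {p ∈ nsBlocks P | p \ E = ∅}

lemma projE_eq_image (E : Set α) (P : Set (Set α)) :
    projE E P = (fun p => p \ E) '' NE E P := by
  ext s
  constructor
  · rintro ⟨p, hp, rfl, hne⟩
    exact ⟨p, ⟨hp, hne⟩, rfl⟩
  · rintro ⟨p, ⟨hp, hne⟩, rfl⟩
    exact ⟨p, hp, rfl, hne⟩

lemma ns_disjoint {P : Set (Set α)} (hP : IsFinitaryPartition P) {p q : Set α}
    (hp : p ∈ nsBlocks P) (hq : q ∈ nsBlocks P) (hne : p ≠ q) : Disjoint p q :=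
  hP.2.2.1 _ hp.1 _ hq.1 hne

lemma sdiff_injOn {P : Set (Set α)} (hP : IsFinitaryPartition P) (E : Set α) :
    Set.InjOn (fun p => p \ E) (NE E P) := by
  intro p hp q hq h
  simp only at h
  by_contra hne
  have hd := ns_disjoint hP hp.1 hq.1 hne
  obtain ⟨x, hx⟩ := Set.nonempty_iff_ne_empty.2 hp.2
  have hx' : x ∈ q \ E := h ▸ hx
  exact Set.disjoint_left.1 hd hx.1 hx'.1

lemma NE_union_EB (E : Set α) (P : Set (Set α)) : NE E P ∪ EB E P = nsBlocks P := by
  ext p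
  constructor
  · rintro (h | h) <;> exact h.1
  · intro h
    by_cases hc : p \ E = ∅
    · exact Or.inr ⟨h, hc⟩
    · exact Or.inl ⟨h, hc⟩

lemma card_split {n : ℕ} {E : Set α} {P : Set (Set α)} (hP : P ∈ BPart α n) :
    (projE E P).ncard + (EB E P).ncard = n := by
  have hNE : (NE E P).Finite := hP.2.1.subset (Set.sep_subset _ _)
  have hEB : (EB E P).Finite := hP.2.1.subset (Set.sep_subset _ _)
  have h1 : (projE E P).ncard = (NE E P).ncard := by
    rw [projE_eq_image, Set.ncard_image_of_injOn (sdiff_injOn hP.1 E)]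
  have hd : Disjoint (NE E P) (EB E P) := by
    rw [Set.disjoint_left]
    rintro p ⟨_, h1⟩ ⟨_, h2⟩
    exact h1 h2
  have h2 : (NE E P ∪ EB E P).ncard = (NE E P).ncard + (EB E P).ncard :=
    Set.ncard_union_eq hd hNE hEB
  rw [NE_union_EB] at h2
  rw [h1, ← h2, hP.2.2]

lemma projE_finite {n : ℕ} {E : Set α} {P : Set (Set α)} (hP : P ∈ BPart α n) :
    (projE E P).Finite := by
  rw [projE_eq_image]
  exact (hP.2.1.subset (Set.sep_subset _ _)).image _

lemma projE_card_le {n : ℕ} {E : Set α} {P : Set (Set α)} (hP : P ∈ BPart α n) :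
    (projE E P).ncard ≤ n := by
  have := card_split (E := E) hP
  omega

lemma projE_nonempty {E : Set α} {P : Set (Set α)} {s : Set α} (hs : s ∈ projE E P) :
    s.Nonempty := by
  obtain ⟨p, _, rfl, hne⟩ := hs
  exact Set.nonempty_iff_ne_empty.2 hne

lemma projE_disj {P : Set (Set α)} (hP : IsFinitaryPartition P) {E : Set α} {s t : Set α}
    (hs : s ∈ projE E P) (ht : t ∈ projE E P) (hne : s ≠ t) : Disjoint s t := by
  obtain ⟨p, hp, rfl, hpne⟩ := hs
  obtain ⟨q, hq, rfl, hqne⟩ := ht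
  have hpq : p ≠ q := by rintro rfl; exact hne rfl
  exact (ns_disjoint hP hp hq hpq).mono Set.diff_subset Set.diff_subset


open Classical in
noncomputable def enc (E : Set α) (P : Set (Set α)) (e : α) : ℕ :=
  if h : (blockOf P e).Nontrivial then
    if blockOf P e \ E ≠ ∅ then rk (projE E P) (blockOf P e \ E)
    else (projE E P).ncard + rk (EB E P) (blockOf P e)
  else (nsBlocks P).ncard

variable {n : ℕ} {E : Set α} {P : Set (Set α)}

lemma mem_ns_of_nontrivial (hP : IsFinitaryPartition P) {e : α}
    (h : (blockOf P e).Nontrivial) : blockOf P e ∈ nsBlocks P :=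
  ⟨(blockOf_spec hP e).1, h⟩

lemma enc_case_a (hP : P ∈ BPart α n) {p : Set α} (hp : p ∈ nsBlocks P)
    (hpe : p \ E ≠ ∅) {e : α} (he : e ∈ p) :
    enc E P e = rk (projE E P) (p \ E) := by
  have hb : blockOf P e = p := blockOf_eq hP.1 hp.1 he
  rw [enc, hb, dif_pos hp.2, if_pos hpe]

lemma enc_case_b (hP : P ∈ BPart α n) {p : Set α} (hp : p ∈ EB E P) {e : α} (he : e ∈ p) :
    enc E P e = (projE E P).ncard + rk (EB E P) p := by
  have hb : blockOf P e = p := blockOf_eq hP.1 hp.1.1 he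
  rw [enc, hb, dif_pos hp.1.2, if_neg (by simpa using hp.2)]

lemma mem_projE_of_ns {p : Set α} (hp : p ∈ nsBlocks P) (hpe : p \ E ≠ ∅) :
    p \ E ∈ projE E P := ⟨p, hp, rfl, hpe⟩

lemma enc_rev_a (hP : P ∈ BPart α n) {e : α} {v : ℕ} (hv : v < (projE E P).ncard)
    (henc : enc E P e = v) :
    ∃ p ∈ nsBlocks P, p \ E ≠ ∅ ∧ e ∈ p ∧ rk (projE E P) (p \ E) = v := by
  have hle : (projE E P).ncard ≤ n := projE_card_le hP
  rw [enc] at henc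
  split at henc
  · rename_i hnt
    split at henc
    · rename_i hne
      exact ⟨blockOf P e, mem_ns_of_nontrivial hP.1 hnt, hne, (blockOf_spec hP.1 e).2, henc⟩
    · omega
  · rw [hP.2.2] at henc
    omega

lemma enc_rev_b (hP : P ∈ BPart α n) {e : α} {v : ℕ} (hv : v < (EB E P).ncard)
    (henc : enc E P e = (projE E P).ncard + v) :
    ∃ p ∈ EB E P, e ∈ p ∧ rk (EB E P) p = v := by
  have hsplit := card_split (E := E) hP
  rw [enc] at henc
  split at henc
  · rename_i hnt
    split at henc
    · rename_i hne
      have hmem := mem_projE_of_ns (mem_ns_of_nontrivial hP.1 hnt) hne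
      have := rk_lt_of_mem (projE_finite hP) hmem
      omega
    · rename_i hne
      have hb : blockOf P e ∈ EB E P :=
        ⟨mem_ns_of_nontrivial hP.1 hnt, by simpa using hne⟩
      exact ⟨blockOf P e, hb, (blockOf_spec hP.1 e).2, by omega⟩
  · rw [hP.2.2] at henc
    omega

lemma block_eq_a (hP : P ∈ BPart α n) {p : Set α} (hp : p ∈ nsBlocks P) (hpe : p \ E ≠ ∅) :
    p = (p \ E) ∪ {e ∈ E | enc E P e = rk (projE E P) (p \ E)} := by
  have hrk : rk (projE E P) (p \ E) < (projE E P).ncard :=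
    rk_lt_of_mem (projE_finite hP) (mem_projE_of_ns hp hpe)
  ext e
  constructor
  · intro he
    by_cases heE : e ∈ E
    · exact Or.inr ⟨heE, enc_case_a hP hp hpe he⟩
    · exact Or.inl ⟨he, heE⟩
  · rintro (he | ⟨heE, henc⟩)
    · exact he.1
    · obtain ⟨q, hq, hqe, heq, hrkq⟩ := enc_rev_a hP hrk henc
      have : q \ E = p \ E :=
        rk_injOn (projE_finite hP) (mem_projE_of_ns hq hqe) (mem_projE_of_ns hp hpe) hrkq
      have hqp : q = p := sdiff_injOn hP.1 E ⟨hq, hqe⟩ ⟨hp, hpe⟩ this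
      exact hqp ▸ heq

lemma EB_finite (hP : P ∈ BPart α n) : (EB E P).Finite :=
  hP.2.1.subset (Set.sep_subset _ _)

lemma block_eq_b (hP : P ∈ BPart α n) {p : Set α} (hp : p ∈ EB E P) :
    p = {e ∈ E | enc E P e = (projE E P).ncard + rk (EB E P) p} := by
  have hrk : rk (EB E P) p < (EB E P).ncard := rk_lt_of_mem (EB_finite hP) hp
  have hpE : p ⊆ E := by
    rw [← Set.diff_eq_empty]
    exact hp.2
  ext e
  constructor
  · intro he
    exact ⟨hpE he, enc_case_b hP hp he⟩
  · rintro ⟨heE, henc⟩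
    obtain ⟨q, hq, heq, hrkq⟩ := enc_rev_b hP hrk henc
    have : q = p := rk_injOn (EB_finite hP) hq hp hrkq
    exact this ▸ heq


lemma partition_eq {Q : Set (Set α)} (hP : IsFinitaryPartition P) (hQ : IsFinitaryPartition Q)
    (hns : nsBlocks P = nsBlocks Q) : P = Q := by
  have key : ∀ P Q : Set (Set α), IsFinitaryPartition P → IsFinitaryPartition Q →
      nsBlocks P = nsBlocks Q → P ⊆ Q := by
    intro P Q hP hQ hns p hp
    by_cases hnt : p.Nontrivial
    · have : p ∈ nsBlocks Q := hns ▸ (⟨hp, hnt⟩ : p ∈ nsBlocks P)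
      exact this.1
    · obtain ⟨a, ha⟩ := hP.2.1 p hp
      have hpa : p = {a} :=
        ((Set.not_nontrivial_iff).1 hnt).eq_singleton_of_mem ha
      have hu : a ∈ ⋃₀ Q := by rw [hQ.2.2.2]; trivial
      obtain ⟨q, hq, haq⟩ := hu
      by_cases hqt : q.Nontrivial
      · exfalso
        have hqP : q ∈ P := (hns ▸ (⟨hq, hqt⟩ : q ∈ nsBlocks Q) : q ∈ nsBlocks P).1
        have hne : p ≠ q := by
          rintro rfl
          exact hnt hqt
        exact Set.disjoint_left.1 (hP.2.2.1 _ hp _ hqP hne) ha haq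
      · have hqa : q = {a} :=
          ((Set.not_nontrivial_iff).1 hqt).eq_singleton_of_mem haq
        rw [hpa, ← hqa]
        exact hq
  exact Set.Subset.antisymm (key P Q hP hQ hns) (key Q P hQ hP hns.symm)

lemma ns_sub {Q : Set (Set α)} (hP : P ∈ BPart α n) (hQ : Q ∈ BPart α n)
    (hS : projE E P = projE E Q) (henc : ∀ e ∈ E, enc E P e = enc E Q e) :
    nsBlocks P ⊆ nsBlocks Q := by
  intro p hp
  by_cases hpe : p \ E = ∅
  · -- p is a block inside E
    have hpEB : p ∈ EB E P := ⟨hp, hpe⟩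
    have hcP := card_split (E := E) hP
    have hcQ := card_split (E := E) hQ
    have hm : (projE E P).ncard = (projE E Q).ncard := by rw [hS]
    have hEBcard : (EB E P).ncard = (EB E Q).ncard := by omega
    obtain ⟨e₀, he₀⟩ := hp.2.nonempty
    have he₀E : e₀ ∈ E := by
      have : p ⊆ E := by rw [← Set.diff_eq_empty]; exact hpe
      exact this he₀
    set v := rk (EB E P) p with hv
    have hvlt : v < (EB E P).ncard := rk_lt_of_mem (EB_finite hP) hpEB
    have hencQ : enc E Q e₀ = (projE E Q).ncard + v := by
      rw [← henc e₀ he₀E, enc_case_b hP hpEB he₀, hm]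
    obtain ⟨q, hq, he₀q, hrkq⟩ := enc_rev_b hQ (by omega) hencQ
    have hqeq : q = {e ∈ E | enc E Q e = (projE E Q).ncard + v} := by
      rw [block_eq_b hQ hq, hrkq]
    have hpeq : p = {e ∈ E | enc E P e = (projE E P).ncard + v} := by
      rw [block_eq_b hP hpEB]
    have : p = q := by
      rw [hpeq, hqeq]
      ext e
      simp only [Set.mem_setOf_eq, hm]
      constructor
      · rintro ⟨h1, h2⟩; exact ⟨h1, by rw [← henc e h1]; exact h2⟩
      · rintro ⟨h1, h2⟩; exact ⟨h1, by rw [henc e h1]; exact h2⟩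
    exact this ▸ hq.1
  · -- p meets the complement of E
    have hsP : p \ E ∈ projE E P := mem_projE_of_ns hp hpe
    have hsQ : p \ E ∈ projE E Q := hS ▸ hsP
    obtain ⟨q, hq, hqeq, hqne⟩ := hsQ
    have hqe : q \ E ≠ ∅ := by rw [← hqeq]; exact hqne
    have hpb := block_eq_a (E := E) hP hp hpe
    have hqb := block_eq_a (E := E) hQ hq hqe
    have : p = q := by
      rw [hpb, hqb, ← hqeq, hS]
      congr 1
      ext e
      simp only [Set.mem_setOf_eq]
      constructor
      · rintro ⟨h1, h2⟩; exact ⟨h1, by rw [← henc e h1]; exact h2⟩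
      · rintro ⟨h1, h2⟩; exact ⟨h1, by rw [henc e h1]; exact h2⟩
    exact this ▸ hq

lemma lemA {Q : Set (Set α)} (hP : P ∈ BPart α n) (hQ : Q ∈ BPart α n)
    (hS : projE E P = projE E Q) (henc : ∀ e ∈ E, enc E P e = enc E Q e) : P = Q :=
  partition_eq hP.1 hQ.1
    (Set.Subset.antisymm (ns_sub hP hQ hS henc)
      (ns_sub hQ hP hS.symm fun e he => (henc e he).symm))


lemma sqle_refl (E : Set α) (P : Set (Set α)) : sqle E P P := by
  intro q hq
  exact ⟨{q}, Set.singleton_subset_iff.2 hq, (Set.sUnion_singleton q).symm⟩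

lemma sqle_trans {R Q : Set (Set α)} (h1 : sqle E R Q) (h2 : sqle E Q P) : sqle E R P := by
  intro r hr
  obtain ⟨S, hSsub, hrS⟩ := h1 r hr
  have hex : ∀ s : Set α, ∃ T : Set (Set α), s ∈ S → T ⊆ projE E P ∧ s = ⋃₀ T := by
    intro s
    by_cases hs : s ∈ S
    · obtain ⟨T, hT1, hT2⟩ := h2 s (hSsub hs)
      exact ⟨T, fun _ => ⟨hT1, hT2⟩⟩
    · exact ⟨∅, fun h => absurd h hs⟩
  choose T hT using hex
  refine ⟨{t | ∃ s ∈ S, t ∈ T s}, ?_, ?_⟩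
  · rintro t ⟨s, hs, hts⟩
    exact ((hT s hs).1) hts
  · rw [hrS]
    ext x
    simp only [Set.mem_sUnion, Set.mem_setOf_eq]
    constructor
    · rintro ⟨s, hs, hxs⟩
      have := (hT s hs).2
      rw [this] at hxs
      obtain ⟨t, ht, hxt⟩ := hxs
      exact ⟨t, ⟨s, hs, ht⟩, hxt⟩
    · rintro ⟨t, ⟨s, hs, hts⟩, hxt⟩
      refine ⟨s, hs, ?_⟩
      rw [(hT s hs).2]
      exact ⟨t, hts, hxt⟩

lemma proj_mono {Q : Set (Set α)} (hP : P ∈ BPart α n) (hQ : Q ∈ BPart α n)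
    (h : sqle E Q P) :
    (projE E Q).ncard ≤ (projE E P).ncard ∧
      ((projE E Q).ncard = (projE E P).ncard → projE E Q = projE E P) := by
  have hPfin := projE_finite (E := E) hP
  have hQfin := projE_finite (E := E) hQ
  have hex : ∀ q : Set α, ∃ t : Set α, q ∈ projE E Q → t ∈ projE E P ∧ t ⊆ q := by
    intro q
    by_cases hq : q ∈ projE E Q
    · obtain ⟨S, hSsub, hqS⟩ := h q hq
      obtain ⟨x, hx⟩ := projE_nonempty hq
      rw [hqS] at hx
      obtain ⟨t, htS, hxt⟩ := hx
      refine ⟨t, fun _ => ⟨hSsub htS, ?_⟩⟩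
      rw [hqS]
      exact Set.subset_sUnion_of_mem htS
    · exact ⟨∅, fun hc => absurd hc hq⟩
  choose φ hφ using hex
  have hmaps : ∀ q ∈ projE E Q, φ q ∈ projE E P := fun q hq => (hφ q hq).1
  have hsub : ∀ q ∈ projE E Q, φ q ⊆ q := fun q hq => (hφ q hq).2
  have hinj : Set.InjOn φ (projE E Q) := by
    intro q hq q' hq' heq
    by_contra hne
    have hd := projE_disj hQ.1 hq hq' hne
    obtain ⟨x, hx⟩ := projE_nonempty (hmaps q hq)
    have hx1 : x ∈ q := hsub q hq hx
    have hx2 : x ∈ q' := hsub q' hq' (heq ▸ hx)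
    exact Set.disjoint_left.1 hd hx1 hx2
  refine ⟨Set.ncard_le_ncard_of_injOn φ hmaps hinj hPfin, ?_⟩
  intro hcard
  have himg : φ '' projE E Q = projE E P := by
    apply Set.eq_of_subset_of_ncard_le
    · rintro t ⟨q, hq, rfl⟩
      exact hmaps q hq
    · rw [Set.ncard_image_of_injOn hinj, hcard]
    · exact hPfin
  have hQP : projE E Q ⊆ projE E P := by
    intro q hq
    obtain ⟨S, hSsub, hqS⟩ := h q hq
    have hall : ∀ t ∈ S, t = φ q := by
      intro t htS
      have htP : t ∈ projE E P := hSsub htS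
      rw [← himg] at htP
      obtain ⟨q', hq', hft⟩ := htP
      have htq : t ⊆ q := by
        rw [hqS]
        exact Set.subset_sUnion_of_mem htS
      have htq' : t ⊆ q' := hft ▸ hsub q' hq'
      have hqq' : q = q' := by
        by_contra hne
        obtain ⟨x, hx⟩ := projE_nonempty (hSsub htS)
        exact Set.disjoint_left.1 (projE_disj hQ.1 hq hq' hne) (htq hx) (htq' hx)
      rw [← hft, hqq']
    obtain ⟨x, hx⟩ := projE_nonempty hq
    rw [hqS] at hx
    obtain ⟨t, htS, _⟩ := hx
    have : q = φ q := by
      apply Set.Subset.antisymm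
      · intro y hy
        rw [hqS] at hy
        obtain ⟨t', ht', hyt'⟩ := hy
        rw [← hall t' ht']
        exact hyt'
      · exact hsub q hq
    rw [this]
    exact hmaps q hq
  exact Set.eq_of_subset_of_ncard_le hQP (le_of_eq hcard.symm) hPfin

lemma enc_le (hP : P ∈ BPart α n) (e : α) : enc E P e ≤ n := by
  have hsplit := card_split (E := E) hP
  rw [enc]
  split
  · rename_i hnt
    split
    · rename_i hne
      have := rk_lt_of_mem (projE_finite hP) (mem_projE_of_ns (mem_ns_of_nontrivial hP.1 hnt) hne)
      omega
    · rename_i hne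
      have hb : blockOf P e ∈ EB E P :=
        ⟨mem_ns_of_nontrivial hP.1 hnt, by simpa using hne⟩
      have := rk_lt_of_mem (EB_finite hP) hb
      omega
  · rw [hP.2.2]

end St15
end

open St15

/-- Every `⊑`-chain without repetition in `ℬₙ(A)` has length at most
`(n+1)^{|E|+1}`: if `P₀, …, P_k ∈ ℬₙ(A)` are pairwise distinct and
`P_{i+1} ⊑ P_i` for all `i < k`, then `k + 1 ≤ (n+1)^{|E|+1}`. -/
theorem statement15 {α : Type*} [Infinite α] (n : ℕ) (hn : 1 ≤ n)
    (E : Set α) (hE : E.Finite) (k : ℕ) (P : ℕ → Set (Set α))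
    (hmem : ∀ i ≤ k, P i ∈ BPart α n)
    (hdist : ∀ i ≤ k, ∀ j ≤ k, i ≠ j → P i ≠ P j)
    (hchain : ∀ i < k, sqle E (P (i + 1)) (P i)) :
    k + 1 ≤ (n + 1) ^ (E.ncard + 1) := by
  classical
  haveI := hE.fintype
  have hstep : ∀ d i, i + d ≤ k → sqle E (P (i + d)) (P i) := by
    intro d
    induction d with
    | zero => exact fun i _ => sqle_refl E (P i)
    | succ d ih =>
      intro i hik
      have h1 := hchain (i + d) (by omega)
      exact sqle_trans h1 (ih i (by omega))
  have hchain' : ∀ i j, i < j → j ≤ k → sqle E (P j) (P i) := by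
    intro i j hij hjk
    have := hstep (j - i) i (by omega)
    rwa [show i + (j - i) = j by omega] at this
  have hlt : ∀ a : ℕ, min a n < n + 1 := fun a => Nat.lt_succ_of_le (Nat.min_le_right _ _)
  set F : ℕ → Fin (n + 1) × (↥E → Fin (n + 1)) := fun i =>
    (⟨min ((projE E (P i)).ncard) n, hlt _⟩,
      fun e => ⟨min (enc E (P i) e.1) n, hlt _⟩) with hF
  have key : ∀ i j, i < j → j ≤ k → F i = F j → False := by
    intro i j hij hjk hFij
    have hPi := hmem i (by omega)
    have hPj := hmem j hjk
    have hmi := projE_card_le (E := E) hPi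
    have hmj := projE_card_le (E := E) hPj
    have h1 : (projE E (P i)).ncard = (projE E (P j)).ncard := by
      have := congrArg (fun x => (x.1 : ℕ)) hFij
      simp only [hF] at this
      omega
    have hsq := hchain' i j hij hjk
    have hSeq : projE E (P j) = projE E (P i) := (proj_mono hPi hPj hsq).2 h1.symm
    have henc : ∀ e ∈ E, enc E (P i) e = enc E (P j) e := by
      intro e he
      have := congrArg (fun x => (x.2 ⟨e, he⟩ : ℕ)) hFij
      simp only [hF] at this
      have l1 := enc_le (E := E) hPi e
      have l2 := enc_le (E := E) hPj e
      omega
    exact hdist i (by omega) j hjk (Nat.ne_of_lt hij) (lemA hPi hPj hSeq.symm henc)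
  have hinjF : Set.InjOn F ↑(Finset.range (k + 1)) := by
    intro i hi j hj hFij
    simp only [Finset.coe_range, Set.mem_Iio] at hi hj
    by_contra hne
    rcases Nat.lt_or_ge i j with h | h
    · exact key i j h (by omega) hFij
    · exact key j i (by omega) (by omega) hFij.symm
  have hcard := Finset.card_le_card_of_injOn F (fun i _ => Finset.mem_univ (F i)) hinjF
  rw [Finset.card_range, Finset.card_univ] at hcard
  have hT : Fintype.card (Fin (n + 1) × (↥E → Fin (n + 1))) = (n + 1) ^ (E.ncard + 1) := by
    rw [Fintype.card_prod, Fintype.card_fun, Fintype.card_fin,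
      Set.ncard_eq_toFinset_card', Set.toFinset_card]
    ring
  rw [hT] at hcard
  exact hcard
end
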